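/- arXiv:2303.15884 — 2 statements merged into one kernel-verified Lean document; each statement's English description precedes it below -/
import Mathlib

section
/- Let R be a reduced extended affine root system. (a) If P ⊆ R^× satisfies W_P = W and no proper subset Q ⊊ P satisfies W_Q = W (P is S-minimal), then P is finite. (b) Every reflectable base of R is finite. -/
open Pointwise
open scoped Classical

noncomputable section

namespace EARSPaper

variable {V : Type*} [AddCommGroup V] [Module ℝ V]

/-- The reflection based on `a`: `x ↦ x - (2 B(x,a)/B(a,a)) • a`.
By the division-by-zero convention this is the identity map when `B a a = 0`. -/
def reflMap (B : LinearMap.BilinForm ℝ V) (a : V) : V →ₗ[ℝ] V :=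
  LinearMap.id - ((2 / B a a) • B.flip a).smulRight a

theorem reflMap_apply (B : LinearMap.BilinForm ℝ V) (a x : V) :
    reflMap B a x = x - (2 / B a a * B x a) • a := by
  simp [reflMap, LinearMap.smulRight_apply, LinearMap.smul_apply, smul_eq_mul]

theorem reflMap_invol (B : LinearMap.BilinForm ℝ V) (a x : V) :
    reflMap B a (reflMap B a x) = x := by
  rcases eq_or_ne (B a a) 0 with h | h
  · simp [reflMap_apply, h]
  · rw [reflMap_apply, reflMap_apply]
    rw [map_sub, map_smul, LinearMap.sub_apply, LinearMap.smul_apply, smul_eq_mul]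
    have hs : 2 / B a a * (B x a - 2 / B a a * B x a * B a a) = -(2 / B a a * B x a) := by
      field_simp
      ring
    rw [hs, neg_smul, sub_neg_eq_add, sub_add_cancel]

/-- The reflection based on `a` as a linear automorphism of `V`. -/
def reflEquiv (B : LinearMap.BilinForm ℝ V) (a : V) : V ≃ₗ[ℝ] V :=
  LinearEquiv.ofLinear (reflMap B a) (reflMap B a)
    (LinearMap.ext fun x => reflMap_invol B a x)
    (LinearMap.ext fun x => reflMap_invol B a x)

@[simp] theorem reflEquiv_apply (B : LinearMap.BilinForm ℝ V) (a x : V) :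
    reflEquiv B a x = reflMap B a x := rfl

/-- The set of nonisotropic elements of `R`. -/
def nonIso (B : LinearMap.BilinForm ℝ V) (R : Set V) : Set V := {a ∈ R | B a a ≠ 0}

/-- Connectedness of a set with respect to the form. -/
def IsConnSet (B : LinearMap.BilinForm ℝ V) (P : Set V) : Prop :=
  ¬ ∃ P₁ P₂ : Set V, P₁.Nonempty ∧ P₂.Nonempty ∧ P₁ ∪ P₂ = P ∧ P₁ ∩ P₂ = ∅ ∧
      ∀ a ∈ P₁, ∀ b ∈ P₂, B a b = 0

/-- Extended affine root system (axioms (R1)-(R6), for a positive semidefinite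
symmetric bilinear form). -/
structure IsEARS (B : LinearMap.BilinForm ℝ V) (R : Set V) : Prop where
  symm : ∀ x y : V, B x y = B y x
  posSemidef : ∀ x : V, 0 ≤ B x x
  lattice : ∃ s : Set V, LinearIndependent ℝ ((↑) : s → V) ∧
      Submodule.span ℝ s = ⊤ ∧ AddSubgroup.closure R = AddSubgroup.closure s
  integrality : ∀ a ∈ nonIso B R, ∀ b ∈ nonIso B R, ∃ n : ℤ, 2 * B b a / B a a = (n : ℝ)
  reflInvariant : ∀ a ∈ nonIso B R, ∀ b ∈ R, reflMap B a b ∈ R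
  isoEq : R ∩ (LinearMap.ker B : Set V) =
      (LinearMap.ker B : Set V) ∩ (nonIso B R - nonIso B R)
  notTwice : ∀ a ∈ nonIso B R, (2 : ℝ) • a ∉ R
  conn : IsConnSet B (nonIso B R)

/-- `R` is reduced: no `α, β ∈ R^×` with `α - 2β ∈ V⁰`. -/
def IsReduced (B : LinearMap.BilinForm ℝ V) (R : Set V) : Prop :=
  ¬ ∃ a ∈ nonIso B R, ∃ b ∈ nonIso B R, a - (2 : ℝ) • b ∈ LinearMap.ker B

/-- `R` is simply laced: the form takes a single value on `R^×`. -/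
def IsSimplyLaced (B : LinearMap.BilinForm ℝ V) (R : Set V) : Prop :=
  ∀ a ∈ nonIso B R, ∀ b ∈ nonIso B R, B a a = B b b

/-- The nullity: the dimension of the radical of the form. -/
def nullity (B : LinearMap.BilinForm ℝ V) : ℕ := Module.finrank ℝ ↥(LinearMap.ker B)

/-- The rank: `dim V - nullity`. -/
def rank (B : LinearMap.BilinForm ℝ V) : ℕ := Module.finrank ℝ V - nullity B

/-- The group generated by the reflections `w_a`, `a ∈ P`, acting on `V`. -/
def weylOn (B : LinearMap.BilinForm ℝ V) (P : Set V) : Subgroup (V ≃ₗ[ℝ] V) :=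
  Subgroup.closure (reflEquiv B '' P)

/-- The set `W_P ⬝ P = {w a : w ∈ W_P, a ∈ P}`. -/
def reflOrbit (B : LinearMap.BilinForm ℝ V) (P : Set V) : Set V :=
  {x | ∃ w ∈ weylOn B P, ∃ a ∈ P, w a = x}

/-- `P` is a reflectable set for `R`: `P ⊆ R^×` and `W_P ⬝ P = R^×`. -/
def IsReflSet (B : LinearMap.BilinForm ℝ V) (R P : Set V) : Prop :=
  P ⊆ nonIso B R ∧ reflOrbit B P = nonIso B R

/-- `P` is a reflectable base for `R`. -/
def IsReflBase (B : LinearMap.BilinForm ℝ V) (R P : Set V) : Prop :=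
  IsReflSet B R P ∧ ∀ Q ⊆ P, Q ≠ P → ¬ IsReflSet B R Q

/-- The space `Ṽ = V ⊕ (V⁰)*`. -/
abbrev VT (B : LinearMap.BilinForm ℝ V) : Type _ := V × Module.Dual ℝ ↥(LinearMap.ker B)

/-- The projection of `V` onto the radical `V⁰` along the fixed complement `V̇`. -/
def projRad (B : LinearMap.BilinForm ℝ V) (Vdot : Submodule ℝ V)
    (hc : IsCompl (LinearMap.ker B) Vdot) : V →ₗ[ℝ] ↥(LinearMap.ker B) :=
  (LinearMap.ker B).linearProjOfIsCompl Vdot hc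

/-- The extension of the form `B` to a nondegenerate symmetric bilinear form on
`Ṽ = V ⊕ (V⁰)*`. -/
def formT (B : LinearMap.BilinForm ℝ V) (Vdot : Submodule ℝ V)
    (hc : IsCompl (LinearMap.ker B) Vdot) : LinearMap.BilinForm ℝ (VT B) :=
  LinearMap.mk₂ ℝ
    (fun x y => B x.1 y.1 + y.2 (projRad B Vdot hc x.1) + x.2 (projRad B Vdot hc y.1))
    (fun x x' y => by
      simp only [Prod.fst_add, Prod.snd_add, map_add, LinearMap.add_apply]; ring)
    (fun c x y => by
      simp only [Prod.smul_fst, Prod.smul_snd, map_smul, LinearMap.smul_apply,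
        smul_eq_mul]; ring)
    (fun x y y' => by
      simp only [Prod.fst_add, Prod.snd_add, map_add, LinearMap.add_apply]; ring)
    (fun c x y => by
      simp only [Prod.smul_fst, Prod.smul_snd, map_smul, LinearMap.smul_apply,
        smul_eq_mul]; ring)

/-- The subgroup of `GL(Ṽ)` generated by the reflections based on `(a, 0)`, `a ∈ P`.
For `P = R^×` this is the extended affine Weyl group `W` of `R`. -/
def weylTilde (B : LinearMap.BilinForm ℝ V) (Vdot : Submodule ℝ V)
    (hc : IsCompl (LinearMap.ker B) Vdot) (P : Set V) :
    Subgroup ((VT B) ≃ₗ[ℝ] (VT B)) :=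
  Subgroup.closure ((fun a => reflEquiv (formT B Vdot hc) (a, 0)) '' P)

theorem reflT_mem_weylTilde (B : LinearMap.BilinForm ℝ V) (Vdot : Submodule ℝ V)
    (hc : IsCompl (LinearMap.ker B) Vdot) {P : Set V} {a : V} (ha : a ∈ P) :
    reflEquiv (formT B Vdot hc) (a, 0) ∈ weylTilde B Vdot hc P :=
  Subgroup.subset_closure ⟨a, ha, rfl⟩

/-- The orbit of `a ∈ V ⊆ Ṽ` under the group generated by the reflections based
on the elements of `G`. -/
def orbitT (B : LinearMap.BilinForm ℝ V) (Vdot : Submodule ℝ V)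
    (hc : IsCompl (LinearMap.ker B) Vdot) (G : Set V) (a : V) : Set V :=
  {x | ∃ w ∈ weylTilde B Vdot hc G, w (a, 0) = (x, 0)}

/-- The set `W_G ⬝ P` computed inside `Ṽ`. -/
def dotSetT (B : LinearMap.BilinForm ℝ V) (Vdot : Submodule ℝ V)
    (hc : IsCompl (LinearMap.ker B) Vdot) (G P : Set V) : Set V :=
  {x | ∃ w ∈ weylTilde B Vdot hc G, ∃ a ∈ P, w (a, 0) = (x, 0)}

/-- `R` is a minimal extended affine root system: for every `α ∈ R^×`,
`W_{R^× ∖ Wα}` is a proper subgroup of `W`. -/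
def IsMinimalEARS (B : LinearMap.BilinForm ℝ V) (Vdot : Submodule ℝ V)
    (hc : IsCompl (LinearMap.ker B) Vdot) (R : Set V) : Prop :=
  ∀ a ∈ nonIso B R,
    weylTilde B Vdot hc (nonIso B R \ orbitT B Vdot hc (nonIso B R) a)
      < weylTilde B Vdot hc (nonIso B R)

/-- The defining relators of the conjugation presented group `Ŵ`:
`ŵ_α² = 1` and `ŵ_α ŵ_β ŵ_α = ŵ_{w_α(β)}`, for `α, β ∈ R^×`. -/
def conjRels (B : LinearMap.BilinForm ℝ V) (R : Set V) :
    Set (FreeGroup ↥(nonIso B R)) :=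
  {r | (∃ a : ↥(nonIso B R), r = FreeGroup.of a * FreeGroup.of a) ∨
      (∃ a b c : ↥(nonIso B R), (c : V) = reflMap B (a : V) (b : V) ∧
        r = FreeGroup.of a * FreeGroup.of b * FreeGroup.of a * (FreeGroup.of c)⁻¹)}

/-- The conjugation presented group `Ŵ` associated with `R`. -/
abbrev WHat (B : LinearMap.BilinForm ℝ V) (R : Set V) := PresentedGroup (conjRels B R)

/-- The generator `ŵ_α` of `Ŵ`. -/
def wHat (B : LinearMap.BilinForm ℝ V) (R : Set V) (a : ↥(nonIso B R)) : WHat B R :=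
  PresentedGroup.of a

/-- `W` has the presentation by conjugation: the canonical epimorphism
`ψ : Ŵ → W`, `ŵ_α ↦ w_α` is an isomorphism. -/
def HasPresByConj (B : LinearMap.BilinForm ℝ V) (Vdot : Submodule ℝ V)
    (hc : IsCompl (LinearMap.ker B) Vdot) (R : Set V) : Prop :=
  ∃ ψ : WHat B R →* ↥(weylTilde B Vdot hc (nonIso B R)),
    (∀ a : ↥(nonIso B R),
      ((ψ (wHat B R a) : (VT B) ≃ₗ[ℝ] (VT B))) =
        reflEquiv (formT B Vdot hc) ((a : V), 0)) ∧
    Function.Bijective ψ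

/-- The restriction of the form to a subspace. -/
def restrictForm (B : LinearMap.BilinForm ℝ V) (U : Submodule ℝ V) :
    LinearMap.BilinForm ℝ ↥U := B.compl₁₂ U.subtype U.subtype

/-- The root system `R_P = R_P^n ∪ R_P^i` associated with a subset `P ⊆ R^×`,
where `R_P^n = W_P ⬝ P` and `R_P^i = (R_P^n - R_P^n) ∩ R⁰`. -/
def earsOf (B : LinearMap.BilinForm ℝ V) (R P : Set V) : Set V :=
  reflOrbit B P ∪
    ((reflOrbit B P - reflOrbit B P) ∩ (R ∩ (LinearMap.ker B : Set V)))

/-- The subgroup `2⟨R⟩` of `⟨R⟩`. -/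
def twoLat (R : Set V) : AddSubgroup V :=
  AddSubgroup.map (AddMonoidHom.mk' (fun x : V => x + x) (fun a b => by abel))
    (AddSubgroup.closure R)



/-! ### Auxiliary development -/

section Helpers

variable {G : Type*} [Group G]

/-- Every element of a closure lies in the closure of a finite subset of the generating image. -/
lemma mem_closure_image_finite {α : Type*} {f : α → G} {P : Set α} {g : G}
    (h : g ∈ Subgroup.closure (f '' P)) :
    ∃ F : Finset α, ↑F ⊆ P ∧ g ∈ Subgroup.closure (f '' (F : Set α)) := by
  classical
  induction h using Subgroup.closure_induction with
  | mem x hx =>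
    obtain ⟨a, ha, rfl⟩ := hx
    exact ⟨{a}, by simpa using ha, Subgroup.subset_closure ⟨a, by simp, rfl⟩⟩
  | one => exact ⟨∅, by simp, Subgroup.one_mem _⟩
  | mul x y hx hy ihx ihy =>
    obtain ⟨F₁, hF₁, hx'⟩ := ihx
    obtain ⟨F₂, hF₂, hy'⟩ := ihy
    refine ⟨F₁ ∪ F₂, by simp [Set.union_subset_iff, hF₁, hF₂, Finset.coe_union], ?_⟩
    have h1 : Subgroup.closure (f '' (F₁ : Set α)) ≤
        Subgroup.closure (f '' ((F₁ ∪ F₂ : Finset α) : Set α)) :=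
      Subgroup.closure_mono (Set.image_mono (by simp [Finset.coe_union]))
    have h2 : Subgroup.closure (f '' (F₂ : Set α)) ≤
        Subgroup.closure (f '' ((F₁ ∪ F₂ : Finset α) : Set α)) :=
      Subgroup.closure_mono (Set.image_mono (by simp [Finset.coe_union]))
    exact Subgroup.mul_mem _ (h1 hx') (h2 hy')
  | inv x hx ihx =>
    obtain ⟨F, hF, hx'⟩ := ihx
    exact ⟨F, hF, Subgroup.inv_mem _ hx'⟩

/-- A submodule contained in a f.g. submodule (over ℤ) is f.g. -/
lemma fg_of_le {A : Type*} [AddCommGroup A] {M N : Submodule ℤ A} (hM : M.FG) (hNM : N ≤ M) :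
    N.FG := by
  haveI := isNoetherian_of_fg_of_noetherian M hM
  have h1 : (N.comap M.subtype).FG := IsNoetherian.noetherian _
  have h2 := h1.map M.subtype
  rwa [Submodule.map_comap_subtype, inf_eq_right.mpr hNM] at h2

/-- A subgroup which embeds additively into a f.g. `ℤ`-module is generated by
finitely many of its elements. -/
lemma subgroup_fg_of_embed {A : Type*} [AddCommGroup A]
    (H : Subgroup G) (f : G → A)
    (hadd : ∀ g ∈ H, ∀ g' ∈ H, f (g * g') = f g + f g')
    (hinj : ∀ g ∈ H, ∀ g' ∈ H, f g = f g' → g = g')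
    (M : Submodule ℤ A) (hM : M.FG) (hmem : ∀ g ∈ H, f g ∈ M) :
    ∃ S : Finset G, ↑S ⊆ (H : Set G) ∧ H ≤ Subgroup.closure (S : Set G) := by
  classical
  have hone : f 1 = 0 := by
    have := hadd 1 (Subgroup.one_mem H) 1 (Subgroup.one_mem H)
    simpa using this.symm
  have hinv : ∀ g ∈ H, f g⁻¹ = - f g := by
    intro g hg
    have h0 := hadd g hg g⁻¹ (Subgroup.inv_mem H hg)
    rw [mul_inv_cancel, hone] at h0
    exact eq_neg_of_add_eq_zero_right h0.symm
  have hpow : ∀ g ∈ H, ∀ z : ℤ, f (g ^ z) = z • f g := by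
    have hn : ∀ g ∈ H, ∀ n : ℕ, f (g ^ n) = n • f g := by
      intro g hg n
      induction n with
      | zero => simpa using hone
      | succ n ih =>
        rw [pow_succ, hadd _ (Subgroup.pow_mem H hg n) _ hg, ih, succ_nsmul]
    intro g hg z
    rcases z with n | n
    · simpa using hn g hg n
    · rw [zpow_negSucc, hinv _ (Subgroup.pow_mem H hg (n+1)), hn g hg (n+1)]
      simp [negSucc_zsmul]
  have hlist : ∀ l : List G, (∀ x ∈ l, x ∈ H) → f l.prod = (l.map f).sum := by
    intro l
    induction l with
    | nil => intro _; simpa using hone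
    | cons x t ih =>
      intro hmem'
      have hx : x ∈ H := hmem' x (by simp)
      have ht : ∀ y ∈ t, y ∈ H := fun y hy => hmem' y (by simp [hy])
      rw [List.prod_cons, hadd x hx t.prod (Subgroup.list_prod_mem H ht), ih ht, List.map_cons,
        List.sum_cons]
  -- the image of `H` under `f` is an additive subgroup
  set I : Submodule ℤ A := AddSubgroup.toIntSubmodule
    { carrier := f '' (H : Set G)
      add_mem' := by
        rintro _ _ ⟨g, hg, rfl⟩ ⟨g', hg', rfl⟩
        exact ⟨g * g', Subgroup.mul_mem H hg hg', hadd g hg g' hg'⟩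
      zero_mem' := ⟨1, Subgroup.one_mem H, hone⟩
      neg_mem' := by
        rintro _ ⟨g, hg, rfl⟩
        exact ⟨g⁻¹, Subgroup.inv_mem H hg, hinv g hg⟩ } with hI
  have hIle : I ≤ M := by
    rintro _ ⟨g, hg, rfl⟩
    exact hmem g hg
  obtain ⟨Sf, hSf⟩ := fg_of_le hM hIle
  have hSfI : ∀ a : Sf, (a : A) ∈ I := by
    intro a
    rw [← hSf]
    exact Submodule.subset_span a.2
  have hrep : ∀ a : Sf, ∃ g, g ∈ H ∧ f g = (a : A) := fun a => hSfI a
  choose gch hgchH hgchf using hrep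
  refine ⟨Sf.attach.image gch, ?_, ?_⟩
  · intro x hx
    simp only [Finset.coe_image, Set.mem_image] at hx
    obtain ⟨a, _, rfl⟩ := hx
    exact hgchH a
  · intro g hg
    have hfg : f g ∈ Submodule.span ℤ (Set.range fun a : Sf => (a : A)) := by
      rw [Subtype.range_coe_subtype]
      have : f g ∈ I := ⟨g, hg, rfl⟩
      rw [← hSf] at this
      simpa using this
    rw [Submodule.mem_span_range_iff_exists_fun] at hfg
    obtain ⟨cf, hcf⟩ := hfg
    set l : List G := (Finset.univ (α := Sf)).toList.map (fun a => gch a ^ cf a) with hl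
    have hlH : ∀ x ∈ l, x ∈ H := by
      intro x hx
      rw [hl, List.mem_map] at hx
      obtain ⟨a, _, rfl⟩ := hx
      exact Subgroup.zpow_mem H (hgchH a) _
    have hfl : f l.prod = f g := by
      rw [hlist l hlH, hl, List.map_map]
      have h1 : (List.map (f ∘ fun a => gch a ^ cf a) Finset.univ.toList).sum
          = (List.map (fun a : Sf => cf a • (a : A)) Finset.univ.toList).sum := by
        congr 1
        apply List.map_congr_left
        intro a _
        simp only [Function.comp_apply]
        rw [hpow (gch a) (hgchH a) (cf a), hgchf a]
      rw [h1, Finset.sum_map_toList]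
      exact hcf
    have hgl : g = l.prod :=
      hinj g hg l.prod (Subgroup.list_prod_mem H hlH) hfl.symm
    rw [hgl]
    apply Subgroup.list_prod_mem
    intro x hx
    rw [hl, List.mem_map] at hx
    obtain ⟨a, _, rfl⟩ := hx
    apply Subgroup.zpow_mem
    apply Subgroup.subset_closure
    simp only [Finset.coe_image, Set.mem_image]
    exact ⟨a, by simp, rfl⟩

/-- Finite quotient + generated kernel gives generators. -/
lemma subgroup_gen_of_quot {X : Type*} (H K : Subgroup G) (f : G → X)
    (himg : (f '' (H : Set G)).Finite)
    (hfib : ∀ g ∈ H, ∀ g' ∈ H, f g = f g' → g'⁻¹ * g ∈ K)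
    (SK : Finset G) (hSK : K ≤ Subgroup.closure (SK : Set G)) :
    ∃ S : Finset G, ↑S ⊆ (H : Set G) ∧
      H ≤ Subgroup.closure ((S : Set G) ∪ (SK : Set G)) := by
  classical
  have hrep : ∀ y ∈ f '' (H : Set G), ∃ g, g ∈ H ∧ f g = y := by
    rintro y ⟨g, hg, rfl⟩; exact ⟨g, hg, rfl⟩
  choose rep hrepH hrepf using hrep
  refine ⟨himg.toFinset.attach.image (fun y => rep y.1 (himg.mem_toFinset.mp y.2)), ?_, ?_⟩
  · intro x hx
    simp only [Finset.coe_image, Set.mem_image] at hx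
    obtain ⟨a, _, rfl⟩ := hx
    exact hrepH _ _
  · intro g hg
    have hy : f g ∈ f '' (H : Set G) := ⟨g, hg, rfl⟩
    set r := rep (f g) hy with hr
    have hrH : r ∈ H := hrepH _ _
    have hrf : f r = f g := hrepf _ _
    have hk : r⁻¹ * g ∈ K := hfib g hg r hrH hrf.symm
    have hgdec : g = r * (r⁻¹ * g) := by group
    rw [hgdec]
    apply Subgroup.mul_mem
    · apply Subgroup.subset_closure
      left
      simp only [Finset.coe_image, Set.mem_image]
      refine ⟨⟨f g, himg.mem_toFinset.mpr hy⟩, by simp, rfl⟩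
    · exact Subgroup.closure_mono (Set.subset_union_right) (hSK hk)

end Helpers

section FormBasics

variable {B : LinearMap.BilinForm ℝ V}

lemma bilin_expand (hsym : ∀ x y : V, B x y = B y x) (x y : V) (t : ℝ) :
    B (x - t • y) (x - t • y) = B x x - 2*t*(B x y) + t^2 * B y y := by
  simp only [map_sub, map_smul, LinearMap.sub_apply, LinearMap.smul_apply, smul_eq_mul]
  rw [hsym y x]; ring

lemma bilin_cs (hsym : ∀ x y : V, B x y = B y x) (hpos : ∀ x : V, 0 ≤ B x x) (x y : V) :
    (B x y)^2 ≤ B x x * B y y := by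
  rcases eq_or_ne (B y y) 0 with h0 | hne
  · have hxy : B x y = 0 := by
      by_contra h
      have h1 := hpos (x - ((B x x + 1)/(2 * B x y)) • y)
      rw [bilin_expand hsym, h0] at h1
      have h2 : 2 * ((B x x + 1)/(2 * B x y)) * B x y = B x x + 1 := by
        field_simp
      nlinarith [h1]
    rw [hxy, h0]
    simp [mul_nonneg (hpos x)]
  · have hy : 0 < B y y := lt_of_le_of_ne (hpos y) (Ne.symm hne)
    have h1 := hpos (x - (B x y / B y y) • y)
    rw [bilin_expand hsym] at h1
    have h2 : (B x y / B y y) * B y y = B x y := by field_simp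
    nlinarith [h1, hy]

lemma bilin_ker_of_isotropic (hsym : ∀ x y : V, B x y = B y x) (hpos : ∀ x : V, 0 ≤ B x x)
    {x : V} (hx : B x x = 0) : B x = 0 := by
  ext y
  have h1 := bilin_cs hsym hpos x y
  rw [hx, zero_mul] at h1
  have h2 := sq_nonneg (B x y)
  have h3 : (B x y)^2 = 0 := le_antisymm h1 h2
  simpa using pow_eq_zero_iff (n := 2) (by norm_num) |>.mp h3

lemma reflMap_isom (hsym : ∀ x y : V, B x y = B y x) (a : V) (x y : V) :
    B (reflMap B a x) (reflMap B a y) = B x y := by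
  rcases eq_or_ne (B a a) 0 with h | h
  · simp [reflMap_apply, h]
  · rw [reflMap_apply, reflMap_apply]
    simp only [map_sub, map_smul, LinearMap.sub_apply, LinearMap.smul_apply, smul_eq_mul]
    rw [hsym a y]
    field_simp
    ring

lemma reflMap_fix (a : V) {x : V} (hx : B x a = 0) : reflMap B a x = x := by
  rw [reflMap_apply, hx]
  simp

lemma reflMap_self {a : V} (ha : B a a ≠ 0) : reflMap B a a = -a := by
  rw [reflMap_apply]
  rw [div_mul_cancel₀ 2 ha]
  module

lemma reflEquiv_mul_self (B : LinearMap.BilinForm ℝ V) (a : V) :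
    reflEquiv B a * reflEquiv B a = 1 := by
  ext x
  exact reflMap_invol B a x

lemma reflEquiv_inv (B : LinearMap.BilinForm ℝ V) (a : V) :
    (reflEquiv B a)⁻¹ = reflEquiv B a :=
  inv_eq_of_mul_eq_one_left (reflEquiv_mul_self B a)

end FormBasics

section EARSBasics

variable {B : LinearMap.BilinForm ℝ V} {R : Set V}

lemma nonIso_mem_R {a : V} (ha : a ∈ nonIso B R) : a ∈ R := ha.1

/-- Integrality extended to the whole lattice. -/
lemma exists_int_on_lattice (hR : IsEARS B R) {a : V} (ha : a ∈ nonIso B R) :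
    ∀ x ∈ Submodule.span ℤ R, ∃ n : ℤ, 2 * B x a / B a a = (n : ℝ) := by
  intro x hx
  induction hx using Submodule.span_induction with
  | mem x hxR =>
    rcases eq_or_ne (B x x) 0 with h0 | hne
    · have hker := bilin_ker_of_isotropic hR.symm hR.posSemidef h0
      refine ⟨0, ?_⟩
      have : B x a = 0 := by rw [hker]; rfl
      simp [this]
    · exact hR.integrality a ha x ⟨hxR, hne⟩
  | zero => exact ⟨0, by simp⟩
  | add x y _ _ ihx ihy =>
    obtain ⟨n, hn⟩ := ihx
    obtain ⟨m, hm⟩ := ihy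
    refine ⟨n + m, ?_⟩
    have hx' : B (x + y) a = B x a + B y a := by
      simp [map_add, LinearMap.add_apply]
    rw [hx', Int.cast_add, ← hn, ← hm]
    ring
  | smul z x _ ih =>
    obtain ⟨n, hn⟩ := ih
    refine ⟨z * n, ?_⟩
    have hx' : B (z • x) a = (z : ℝ) * B x a := by
      rw [← Int.cast_smul_eq_zsmul ℝ z x]
      simp [map_smul, LinearMap.smul_apply, smul_eq_mul]
    rw [hx', Int.cast_mul, ← hn]
    ring

lemma reflMap_lattice (hR : IsEARS B R) {a : V} (ha : a ∈ nonIso B R) :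
    ∀ x ∈ Submodule.span ℤ R, reflMap B a x ∈ Submodule.span ℤ R := by
  intro x hx
  obtain ⟨n, hn⟩ := exists_int_on_lattice hR ha x hx
  rw [reflMap_apply]
  have h1 : (2 / B a a * B x a) • a = n • a := by
    rw [← Int.cast_smul_eq_zsmul ℝ n a, ← hn]
    congr 1
    field_simp
  rw [h1]
  exact sub_mem hx ((Submodule.span ℤ R).smul_mem n (Submodule.subset_span ha.1))

/-- Properties of elements of the Weyl group acting on `V`. -/
structure VProps (B : LinearMap.BilinForm ℝ V) (R : Set V) (w : V ≃ₗ[ℝ] V) : Prop where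
  isom : ∀ x y : V, B (w x) (w y) = B x y
  kfix : ∀ x : V, B x = 0 → w x = x
  latt : ∀ x ∈ Submodule.span ℤ R, w x ∈ Submodule.span ℤ R
  rmem : ∀ x ∈ nonIso B R, w x ∈ nonIso B R

lemma VProps_one : VProps B R 1 :=
  ⟨fun _ _ => rfl, fun _ _ => rfl, fun _ h => h, fun _ h => h⟩

lemma VProps_mul {w u : V ≃ₗ[ℝ] V} (hw : VProps B R w) (hu : VProps B R u) :
    VProps B R (w * u) := by
  refine ⟨fun x y => ?_, fun x hx => ?_, fun x hx => ?_, fun x hx => ?_⟩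
  · show B (w (u x)) (w (u y)) = B x y
    rw [hw.isom, hu.isom]
  · show w (u x) = x
    rw [hu.kfix x hx, hw.kfix x hx]
  · exact hw.latt _ (hu.latt x hx)
  · exact hw.rmem _ (hu.rmem x hx)

lemma VProps_refl (hR : IsEARS B R) {a : V} (ha : a ∈ nonIso B R) :
    VProps B R (reflEquiv B a) := by
  refine ⟨fun x y => reflMap_isom hR.symm a x y, fun x hx => ?_, fun x hx => ?_,
    fun x hx => ?_⟩
  · apply reflMap_fix
    rw [hx]; rfl
  · exact reflMap_lattice hR ha x hx
  · refine ⟨hR.reflInvariant a ha x hx.1, ?_⟩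
    show B (reflMap B a x) (reflMap B a x) ≠ 0
    rw [reflMap_isom hR.symm]
    exact hx.2

lemma wv_props (hR : IsEARS B R) :
    ∀ w ∈ weylOn B (nonIso B R), VProps B R w ∧ VProps B R w⁻¹ := by
  intro w hw
  induction hw using Subgroup.closure_induction with
  | mem x hx =>
    obtain ⟨a, ha, rfl⟩ := hx
    constructor
    · exact VProps_refl hR ha
    · rw [reflEquiv_inv]
      exact VProps_refl hR ha
  | one => exact ⟨VProps_one, by rw [inv_one]; exact VProps_one⟩
  | mul x y _ _ ihx ihy =>
    refine ⟨VProps_mul ihx.1 ihy.1, ?_⟩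
    rw [mul_inv_rev]
    exact VProps_mul ihy.2 ihx.2
  | inv x _ ih =>
    refine ⟨ih.2, ?_⟩
    rw [inv_inv]
    exact ih.1

lemma refl_mem_weylOn {P : Set V} {a : V} (ha : a ∈ P) :
    reflEquiv B a ∈ weylOn B P :=
  Subgroup.subset_closure ⟨a, ha, rfl⟩

lemma weylOn_mono {P Q : Set V} (h : P ⊆ Q) : weylOn B P ≤ weylOn B Q :=
  Subgroup.closure_mono (Set.image_mono h)

end EARSBasics

section Chains

variable {B : LinearMap.BilinForm ℝ V} {R : Set V}

/-- The adjacency relation on nonisotropic roots. -/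
def chRel (B : LinearMap.BilinForm ℝ V) (R : Set V) : V → V → Prop :=
  fun u v => v ∈ nonIso B R ∧ B u v ≠ 0

lemma reach_all (hR : IsEARS B R) {a b : V} (ha : a ∈ nonIso B R) (hb : b ∈ nonIso B R) :
    Relation.ReflTransGen (chRel B R) a b := by
  by_contra hnot
  apply hR.conn
  refine ⟨{x | x ∈ nonIso B R ∧ Relation.ReflTransGen (chRel B R) a x},
          {x | x ∈ nonIso B R ∧ ¬ Relation.ReflTransGen (chRel B R) a x},
          ⟨a, ha, Relation.ReflTransGen.refl⟩, ⟨b, hb, hnot⟩, ?_, ?_, ?_⟩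
  · ext x
    constructor
    · rintro (⟨h, _⟩ | ⟨h, _⟩) <;> exact h
    · intro hx
      by_cases h : Relation.ReflTransGen (chRel B R) a x
      · exact Or.inl ⟨hx, h⟩
      · exact Or.inr ⟨hx, h⟩
  · ext x
    simp only [Set.mem_inter_iff, Set.mem_setOf_eq, Set.mem_empty_iff_false, iff_false]
    tauto
  · rintro x ⟨hx, hrx⟩ y ⟨hy, hry⟩
    by_contra hxy
    exact hry (hrx.tail ⟨hy, hxy⟩)

lemma chain_shorten (hR : IsEARS B R) {x b : V} (hx : x ∈ nonIso B R) (hb : b ∈ nonIso B R) :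
    ∃ b' ∈ nonIso B R, (∃ w ∈ weylOn B (nonIso B R), w b = b') ∧
      B b' b' = B b b ∧ B x b' ≠ 0 := by
  have h := reach_all hR hx hb
  clear hx
  induction h using Relation.ReflTransGen.head_induction_on with
  | refl => exact ⟨b, hb, ⟨1, Subgroup.one_mem _, rfl⟩, rfl, hb.2⟩
  | @head a c h' hrest ih =>
    obtain ⟨hc, hac⟩ := h'
    obtain ⟨b', hb', ⟨w, hwW, hwb⟩, hlen, hcb'⟩ := ih
    by_cases hab' : B a b' = 0
    · refine ⟨reflMap B c b', (VProps_refl hR hc).rmem b' hb',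
        ⟨reflEquiv B c * w, Subgroup.mul_mem _ (refl_mem_weylOn hc) hwW, by
          show (reflEquiv B c) (w b) = _
          rw [hwb]; rfl⟩, ?_, ?_⟩
      · rw [reflMap_isom hR.symm, hlen]
      · rw [reflMap_apply]
        have expand : B a (b' - (2 / B c c * B b' c) • c) =
            B a b' - (2 / B c c * B b' c) * B a c := by
          simp [map_sub, map_smul, smul_eq_mul]
        rw [expand, hab', zero_sub, neg_ne_zero]
        apply mul_ne_zero _ hac
        apply mul_ne_zero (div_ne_zero two_ne_zero hc.2)
        rw [hR.symm b' c]
        exact hcb'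
    · exact ⟨b', hb', ⟨w, hwW, hwb⟩, hlen, hab'⟩

end Chains

section Arith

variable {B : LinearMap.BilinForm ℝ V} {R : Set V}

lemma int_div_aux {n₁ n₂ : ℤ} (h1 : n₁ ≠ 0) (h2 : n₂ ≠ 0) (hp : 0 < n₁ * n₂)
    (hle : n₁ * n₂ ≤ 4) :
    ∃ m : ℤ, 0 < m ∧ m ≤ 48 ∧ m * n₁ = 12 * n₂ := by
  suffices h : ∃ m ∈ Finset.Icc (1:ℤ) 48, m * n₁ = 12 * n₂ by
    obtain ⟨m, hm, hmeq⟩ := h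
    rw [Finset.mem_Icc] at hm
    exact ⟨m, by omega, hm.2, hmeq⟩
  have e : |n₁| * |n₂| = n₁ * n₂ := by rw [← abs_mul, abs_of_pos hp]
  have h1' : 1 ≤ |n₁| := Int.one_le_abs h1
  have h2' : 1 ≤ |n₂| := Int.one_le_abs h2
  have ha1 : |n₁| ≤ 4 := by nlinarith
  have ha2 : |n₂| ≤ 4 := by nlinarith
  obtain ⟨l1, u1⟩ := abs_le.mp ha1
  obtain ⟨l2, u2⟩ := abs_le.mp ha2
  interval_cases n₁ <;> interval_cases n₂ <;>
    first
      | (exfalso; revert hp hle h1 h2; decide)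
      | decide

lemma ratio_ints (hR : IsEARS B R) {a b : V} (ha : a ∈ nonIso B R) (hb : b ∈ nonIso B R) :
    ∃ n₁ n₂ : ℤ, n₁ ≠ 0 ∧ n₂ ≠ 0 ∧ 0 < n₁ * n₂ ∧ n₁ * n₂ ≤ 4 ∧
      (n₂:ℝ) * B b b = (n₁:ℝ) * B a a := by
  obtain ⟨b', hb', _, hlen, hab'⟩ := chain_shorten hR ha hb
  have hBa : (0:ℝ) < B a a := lt_of_le_of_ne (hR.posSemidef a) (Ne.symm ha.2)
  have hBb' : (0:ℝ) < B b' b' := lt_of_le_of_ne (hR.posSemidef b') (Ne.symm hb'.2)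
  obtain ⟨n₁, hn₁⟩ := hR.integrality a ha b' hb'
  obtain ⟨n₂, hn₂⟩ := hR.integrality b' hb' a ha
  have e₁ : (n₁:ℝ) * B a a = 2 * B b' a := by
    rw [← hn₁]; field_simp
  have e₂ : (n₂:ℝ) * B b' b' = 2 * B a b' := by
    rw [← hn₂]; field_simp
  have e₃ : B b' a = B a b' := hR.symm b' a
  have hba' : B b' a ≠ 0 := by rw [e₃]; exact hab'
  have hn₁0 : n₁ ≠ 0 := by
    intro h
    rw [h] at e₁
    simp only [Int.cast_zero, zero_mul] at e₁
    exact hba' (by linarith)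
  have hn₂0 : n₂ ≠ 0 := by
    intro h
    rw [h] at e₂
    simp only [Int.cast_zero, zero_mul] at e₂
    exact hab' (by linarith)
  have eprod : (n₁:ℝ) * (n₂:ℝ) * (B a a * B b' b') = 4 * (B a b')^2 := by
    linear_combination ((n₂:ℝ) * B b' b') * e₁ + (2 * B b' a) * e₂ + (4 * B a b') * e₃
  have hcs := bilin_cs hR.symm hR.posSemidef a b'
  have hsq : (0:ℝ) < (B a b')^2 := by positivity
  have hprodR : (0:ℝ) < (n₁:ℝ) * (n₂:ℝ) := by nlinarith
  have hleR : (n₁:ℝ) * (n₂:ℝ) ≤ 4 := by nlinarith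
  refine ⟨n₁, n₂, hn₁0, hn₂0, ?_, ?_, ?_⟩
  · exact_mod_cast (by push_cast; linarith : (0:ℝ) < ((n₁ * n₂ : ℤ) : ℝ))
  · exact_mod_cast (by push_cast; linarith : ((n₁ * n₂ : ℤ) : ℝ) ≤ 4)
  · rw [← hlen]; linarith

lemma length_int (hR : IsEARS B R) {a b : V} (ha : a ∈ nonIso B R) (hb : b ∈ nonIso B R) :
    ∃ m : ℤ, 0 < m ∧ m ≤ 48 ∧ (m:ℝ) * B b b = 12 * B a a := by
  obtain ⟨n₁, n₂, h1, h2, hp, hle, hee⟩ := ratio_ints hR ha hb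
  obtain ⟨m, hm0, hm48, hmeq⟩ := int_div_aux h1 h2 hp hle
  refine ⟨m, hm0, hm48, ?_⟩
  have hmeq' : (m:ℝ) * (n₁:ℝ) = 12 * (n₂:ℝ) := by exact_mod_cast hmeq
  have hcz : ((n₂:ℝ)) * ((m:ℝ) * B b b - 12 * B a a) = 0 := by
    linear_combination (m:ℝ) * hee + B a a * hmeq'
  have hn2 : ((n₂:ℝ)) ≠ 0 := Int.cast_ne_zero.mpr h2
  have := (mul_eq_zero.mp hcz).resolve_left hn2
  linarith [this]

lemma length_le (hR : IsEARS B R) {a b : V} (ha : a ∈ nonIso B R) (hb : b ∈ nonIso B R) :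
    B b b ≤ 12 * B a a := by
  obtain ⟨m, hm0, _, hmeq⟩ := length_int hR ha hb
  have hBb : (0:ℝ) < B b b := lt_of_le_of_ne (hR.posSemidef b) (Ne.symm hb.2)
  have hm1 : (1:ℝ) ≤ (m:ℝ) := by exact_mod_cast hm0
  nlinarith

lemma B_int_on_R (hR : IsEARS B R) {a₀ : V} (ha₀ : a₀ ∈ nonIso B R) :
    ∀ x ∈ R, ∀ y ∈ R, ∃ k : ℤ, ((Nat.factorial 48 : ℤ):ℝ) * B x y = (k:ℝ) * B a₀ a₀ := by
  intro x hx y hy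
  rcases eq_or_ne (B x x) 0 with h0 | hxn
  · have hker := bilin_ker_of_isotropic hR.symm hR.posSemidef h0
    have hxy : B x y = 0 := by rw [hker]; rfl
    exact ⟨0, by rw [hxy]; simp⟩
  rcases eq_or_ne (B y y) 0 with h0 | hyn
  · have hker := bilin_ker_of_isotropic hR.symm hR.posSemidef h0
    have hxy : B x y = 0 := by rw [hR.symm x y, hker]; rfl
    exact ⟨0, by rw [hxy]; simp⟩
  obtain ⟨n, hn⟩ := hR.integrality y ⟨hy, hyn⟩ x ⟨hx, hxn⟩
  obtain ⟨m, hm0, hm48, hmeq⟩ := length_int hR ha₀ ⟨hy, hyn⟩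
  have hdvd : m ∣ (Nat.factorial 48 : ℤ) := by
    have h1 : m.toNat ∣ Nat.factorial 48 := Nat.dvd_factorial (by omega) (by omega)
    have h2 : ((m.toNat : ℤ)) ∣ ((Nat.factorial 48 : ℕ) : ℤ) := Int.natCast_dvd_natCast.mpr h1
    rwa [Int.toNat_of_nonneg (le_of_lt hm0)] at h2
  obtain ⟨u, hu⟩ := hdvd
  refine ⟨6 * n * u, ?_⟩
  have hyy : (0:ℝ) < B y y := lt_of_le_of_ne (hR.posSemidef y) (Ne.symm hyn)
  have hn' : (n:ℝ) * B y y = 2 * B x y := by rw [← hn]; field_simp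
  have hu' : ((Nat.factorial 48 : ℤ):ℝ) = (m:ℝ) * (u:ℝ) := by exact_mod_cast hu
  push_cast
  push_cast at hu'
  linear_combination (B x y) * hu' + ((u:ℝ) * (n:ℝ) / 2) * hmeq - ((u:ℝ) * (m:ℝ) / 2) * hn'

lemma B_int_on_L (hR : IsEARS B R) {a₀ : V} (ha₀ : a₀ ∈ nonIso B R) :
    ∀ x ∈ Submodule.span ℤ R, ∀ y ∈ Submodule.span ℤ R,
      ∃ k : ℤ, ((Nat.factorial 48 : ℤ):ℝ) * B x y = (k:ℝ) * B a₀ a₀ := by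
  intro x hx
  induction hx using Submodule.span_induction with
  | mem x hxR =>
    intro y hy
    induction hy using Submodule.span_induction with
    | mem y hyR => exact B_int_on_R hR ha₀ x hxR y hyR
    | zero => exact ⟨0, by simp⟩
    | add y z _ _ ihy ihz =>
      obtain ⟨k₁, hk₁⟩ := ihy
      obtain ⟨k₂, hk₂⟩ := ihz
      refine ⟨k₁ + k₂, ?_⟩
      have : B x (y + z) = B x y + B x z := by simp
      rw [this]; push_cast at hk₁ hk₂ ⊢ <;> linarith
    | smul z y _ ih =>
      obtain ⟨k, hk⟩ := ih
      refine ⟨z * k, ?_⟩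
      have : B x (z • y) = (z:ℝ) * B x y := by
        rw [← Int.cast_smul_eq_zsmul ℝ z y]; simp
      rw [this]; push_cast at hk ⊢; linear_combination (z:ℝ) * hk
  | zero => intro y hy; exact ⟨0, by simp⟩
  | add x z hx hz ihx ihz =>
    intro y hy
    obtain ⟨k₁, hk₁⟩ := ihx y hy
    obtain ⟨k₂, hk₂⟩ := ihz y hy
    refine ⟨k₁ + k₂, ?_⟩
    have : B (x + z) y = B x y + B z y := by simp [map_add, LinearMap.add_apply]
    rw [this]; push_cast at hk₁ hk₂ ⊢ <;> linarith
  | smul z x hx ih =>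
    intro y hy
    obtain ⟨k, hk⟩ := ih y hy
    refine ⟨z * k, ?_⟩
    have : B (z • x) y = (z:ℝ) * B x y := by
      rw [← Int.cast_smul_eq_zsmul ℝ z x]; simp [map_smul, LinearMap.smul_apply, smul_eq_mul]
    rw [this]; push_cast at hk ⊢; linear_combination (z:ℝ) * hk

lemma finite_vals {c : ℝ} (hc : 0 < c) (D : ℝ) :
    {t : ℝ | (∃ k : ℤ, ((Nat.factorial 48 : ℤ):ℝ) * t = (k:ℝ) * c) ∧ t^2 ≤ D}.Finite := by
  set K : ℝ := ((Nat.factorial 48 : ℤ):ℝ) with hK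
  have hKpos : 0 < K := by
    rw [hK]
    exact_mod_cast Int.natCast_pos.mpr (Nat.factorial_pos 48)
  set M : ℝ := K^2 * D / c^2 with hM
  set N : ℤ := ⌈M⌉ with hN
  apply Set.Finite.subset ((Set.finite_Icc (-N) N).image (fun k : ℤ => (k:ℝ) * c / K))
  rintro t ⟨⟨k, hk⟩, ht⟩
  have htk : t = (k:ℝ) * c / K := by
    field_simp
    linarith [hk]
  have hksq : ((k:ℝ))^2 ≤ M := by
    rw [hM, le_div_iff₀ (by positivity : (0:ℝ) < c^2)]
    have h1 : ((k:ℝ) * c)^2 = (K * t)^2 := by rw [← hk]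
    nlinarith [sq_nonneg (K*t), sq_nonneg K, mul_le_mul_of_nonneg_left ht (by positivity : (0:ℝ) ≤ K^2)]
  have habs : |k| ≤ k^2 := by
    rcases eq_or_ne k 0 with rfl | h
    · simp
    · nlinarith [Int.one_le_abs h, sq_abs k]
  have hkN : |k| ≤ N := by
    have h1 : ((|k| : ℤ) : ℝ) ≤ ((k^2 : ℤ) : ℝ) := by exact_mod_cast habs
    have h2 : ((k^2 : ℤ) : ℝ) ≤ M := by push_cast; exact hksq
    have h3 : (M : ℝ) ≤ (N : ℝ) := by rw [hN]; exact Int.le_ceil M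
    exact_mod_cast le_trans h1 (le_trans h2 h3)
  obtain ⟨hl, hr⟩ := abs_le.mp hkN
  exact ⟨k, Set.mem_Icc.mpr ⟨hl, hr⟩, htk.symm⟩

end Arith

section WVFG

variable {B : LinearMap.BilinForm ℝ V} {R : Set V}

lemma span_R_eq_span_s {s : Set V}
    (hcl : AddSubgroup.closure R = AddSubgroup.closure s) :
    Submodule.span ℤ R = Submodule.span ℤ (s : Set V) := by
  have h1 := Submodule.span_int_eq_addSubgroupClosure (M := V) R
  have h2 := Submodule.span_int_eq_addSubgroupClosure (M := V) s
  ext x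
  constructor
  · intro hx
    have : x ∈ (Submodule.span ℤ R).toAddSubgroup := hx
    rw [h1, hcl, ← h2] at this
    exact this
  · intro hx
    have : x ∈ (Submodule.span ℤ (s : Set V)).toAddSubgroup := hx
    rw [h2, ← hcl, ← h1] at this
    exact this

lemma weylOn_fg [FiniteDimensional ℝ V] (hR : IsEARS B R) :
    ∃ S : Finset (V ≃ₗ[ℝ] V), ↑S ⊆ (weylOn B (nonIso B R) : Set (V ≃ₗ[ℝ] V)) ∧
      weylOn B (nonIso B R) ≤ Subgroup.closure (S : Set (V ≃ₗ[ℝ] V)) := by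
  classical
  rcases Set.eq_empty_or_nonempty (nonIso B R) with hemp | ⟨a₀, ha₀⟩
  · refine ⟨∅, by simp, ?_⟩
    rw [weylOn, hemp]
    simp
  obtain ⟨s, hli, hsp, hcl⟩ := hR.lattice
  have hsfin : s.Finite := hli.setFinite
  haveI := hsfin.fintype
  have hspan_eq : Submodule.span ℤ R = Submodule.span ℤ s := span_R_eq_span_s hcl
  have hLfg : (Submodule.span ℤ R).FG := by
    rw [hspan_eq]; exact Submodule.fg_span hsfin
  have hsL : ∀ i : s, (i : V) ∈ Submodule.span ℤ R := fun i => by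
    rw [hspan_eq]; exact Submodule.subset_span i.2
  have hc : (0:ℝ) < B a₀ a₀ := lt_of_le_of_ne (hR.posSemidef a₀) (Ne.symm ha₀.2)
  set W := weylOn B (nonIso B R) with hW
  -- the "translation" subgroup T
  set T : Subgroup (V ≃ₗ[ℝ] V) :=
    { carrier := {w | w ∈ W ∧ ∀ v : V, B (w v - v) = 0}
      mul_mem' := by
        rintro w u ⟨hwW, hw⟩ ⟨huW, hu⟩
        refine ⟨Subgroup.mul_mem _ hwW huW, fun v => ?_⟩
        have he : (w * u) v - v = (w (u v) - u v) + (u v - v) := by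
          show w (u v) - v = _
          abel
        rw [he, map_add, hw (u v), hu v, add_zero]
      one_mem' := ⟨Subgroup.one_mem _, fun v => by simp⟩
      inv_mem' := by
        rintro w ⟨hwW, hw⟩
        refine ⟨Subgroup.inv_mem _ hwW, fun v => ?_⟩
        have h2 : w (w⁻¹ v) = v := by
          have : (w * w⁻¹) v = v := by rw [mul_inv_cancel]; rfl
          exact this
        have h1 := hw (w⁻¹ v)
        rw [h2] at h1
        have he : w⁻¹ v - v = -(v - w⁻¹ v) := by abel
        rw [he, map_neg, h1, neg_zero] } with hT
  have hTW : T ≤ W := fun w hw => hw.1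
  -- T is finitely generated
  obtain ⟨SK, hSKsub, hSKle⟩ :
      ∃ SK : Finset (V ≃ₗ[ℝ] V), ↑SK ⊆ (T : Set (V ≃ₗ[ℝ] V)) ∧
        T ≤ Subgroup.closure (SK : Set (V ≃ₗ[ℝ] V)) := by
    have kerfix : ∀ w ∈ W, ∀ z : V, B z = 0 → w z = z := fun w hw z hz =>
      ((wv_props hR w hw).1).kfix z hz
    refine subgroup_fg_of_embed T (fun w => fun i : s => w i - i) ?_ ?_
      (Submodule.pi Set.univ
        (fun _ : s => (Submodule.span ℤ R) ⊓ ((LinearMap.ker B).restrictScalars ℤ)))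
      (Submodule.fg_pi (fun i => fg_of_le hLfg inf_le_left)) ?_
    · -- additivity
      rintro w ⟨hwW, hw⟩ u ⟨huW, hu⟩
      funext i
      simp only [Pi.add_apply]
      have hδ : B (u i - i) = 0 := hu i
      have h1 : w ((i : V) + (u i - i)) = w i + (u i - i) := by
        rw [map_add, kerfix w hwW _ hδ]
      have h2 : (w * u) (i : V) = w (u i) := rfl
      have h3 : ((i : V) + (u i - i)) = u i := by abel
      rw [h2, ← h3, h1]
      abel
    · -- injectivity
      rintro w ⟨hwW, _⟩ u ⟨huW, _⟩ hfeq
      apply LinearEquiv.toLinearMap_injective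
      apply LinearMap.ext_on hsp
      intro x hx
      have := congrFun hfeq ⟨x, hx⟩
      simpa [sub_eq_sub_iff_sub_eq_sub] using by
        have h' : w x - x = u x - x := this
        simpa using congrArg (fun t => t + x) h'
    · rintro w ⟨hwW, hw⟩
      rw [Submodule.mem_pi]
      intro i _
      refine ⟨sub_mem (((wv_props hR w hwW).1).latt _ (hsL i)) (hsL i), ?_⟩
      exact hw i
  -- finitely many T-cosets via the Gram matrix map
  obtain ⟨S, hSsub, hSle⟩ :
      ∃ S : Finset (V ≃ₗ[ℝ] V), ↑S ⊆ (W : Set (V ≃ₗ[ℝ] V)) ∧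
        W ≤ Subgroup.closure ((S : Set (V ≃ₗ[ℝ] V)) ∪ (SK : Set (V ≃ₗ[ℝ] V))) := by
    refine subgroup_gen_of_quot W T (fun w => fun p : s × s => B (w p.1) p.2) ?_ ?_ SK hSKle
    · -- finite image
      apply Set.Finite.subset
        (Set.Finite.pi (t := fun p : s × s =>
          {t : ℝ | (∃ k : ℤ, ((Nat.factorial 48 : ℤ):ℝ) * t = (k:ℝ) * B a₀ a₀) ∧
            t^2 ≤ (B p.1 p.1) * (B p.2 p.2)})
          (fun p => finite_vals hc _))
      rintro _ ⟨w, hwW, rfl⟩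
      rw [Set.mem_univ_pi]
      intro p
      refine ⟨?_, ?_⟩
      · exact B_int_on_L hR ha₀ _ (((wv_props hR w hwW).1).latt _ (hsL p.1)) _ (hsL p.2)
      · have h1 := bilin_cs hR.symm hR.posSemidef (w p.1) (p.2 : V)
        rw [((wv_props hR w hwW).1).isom p.1 p.1] at h1
        exact h1
    · -- fibers are T-cosets
      intro w hwW u huW hfeq
      have step1 : ∀ v : V, B (w v - u v) = 0 := by
        have hg : (LinearMap.comp B (w.toLinearMap - u.toLinearMap) : V →ₗ[ℝ] (V →ₗ[ℝ] ℝ)) = 0 := by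
          apply LinearMap.ext_on hsp
          intro x hx
          have hin : (B (w x - u x) : V →ₗ[ℝ] ℝ) = 0 := by
            apply LinearMap.ext_on hsp
            intro y hy
            have h2 : B (w x) y = B (u x) y := congrFun hfeq (⟨x, hx⟩, ⟨y, hy⟩)
            show B (w x - u x) y = (0 : V →ₗ[ℝ] ℝ) y
            simp only [map_sub, LinearMap.sub_apply, LinearMap.zero_apply, h2, sub_self]
          show (LinearMap.comp B (w.toLinearMap - u.toLinearMap)) x = (0 : V →ₗ[ℝ] (V →ₗ[ℝ] ℝ)) x
          simp only [LinearMap.comp_apply, LinearMap.sub_apply, LinearMap.zero_apply,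
            LinearEquiv.coe_coe]
          exact hin
        intro v
        have hv := LinearMap.congr_fun hg v
        simpa using hv
      refine ⟨Subgroup.mul_mem _ (Subgroup.inv_mem _ huW) hwW, fun v => ?_⟩
      have hz : B (w v - u v) = 0 := step1 v
      have h2 : (u⁻¹ * w) v - v = u⁻¹ (w v) - u⁻¹ (u v) := by
        show u⁻¹ (w v) - v = _
        congr 1
        have h4 : (u⁻¹ * u) v = v := by rw [inv_mul_cancel]; rfl
        exact h4.symm
      rw [h2, ← map_sub]
      have h3 : u⁻¹ (w v - u v) = w v - u v := ((wv_props hR u huW).2).kfix _ hz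
      rw [h3]
      exact hz
  refine ⟨S ∪ SK, ?_, ?_⟩
  · rw [Finset.coe_union]
    exact Set.union_subset hSsub (fun x hx => hTW (hSKsub hx))
  · rw [Finset.coe_union]
    exact hSle

end WVFG

section Tilde

variable {B : LinearMap.BilinForm ℝ V} {R : Set V}
variable {Vdot : Submodule ℝ V} {hcpl : IsCompl (LinearMap.ker B) Vdot}

/-- The `V`-component of the action on `(0, λ)`. -/
def kfun (w : VT B ≃ₗ[ℝ] VT B) : Module.Dual ℝ ↥(LinearMap.ker B) → V :=
  fun l => (w (0, l)).1

/-- The `ℤ`-module that contains all the `kfun`s. -/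
def MM (B : LinearMap.BilinForm ℝ V) (R : Set V) (Vdot : Submodule ℝ V)
    (hc : IsCompl (LinearMap.ker B) Vdot) (c : ℝ) :
    Submodule ℤ (Module.Dual ℝ ↥(LinearMap.ker B) → V) :=
  Submodule.span ℤ {g | ∃ x ∈ Submodule.span ℤ R, ∃ y ∈ Submodule.span ℤ R,
    g = fun l => (l (projRad B Vdot hc x) * (1/(6*c))) • y}

lemma formT_apply' (B : LinearMap.BilinForm ℝ V) (Vdot : Submodule ℝ V)
    (hc : IsCompl (LinearMap.ker B) Vdot) (x y : VT B) :
    formT B Vdot hc x y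
      = B x.1 y.1 + y.2 (projRad B Vdot hc x.1) + x.2 (projRad B Vdot hc y.1) := rfl

lemma formT_diag (B : LinearMap.BilinForm ℝ V) (Vdot : Submodule ℝ V)
    (hc : IsCompl (LinearMap.ker B) Vdot) (a : V) :
    formT B Vdot hc (a, 0) (a, 0) = B a a := by
  rw [formT_apply']
  simp

lemma reflT_apply (B : LinearMap.BilinForm ℝ V) (Vdot : Submodule ℝ V)
    (hc : IsCompl (LinearMap.ker B) Vdot) (a : V) (v : V)
    (l : Module.Dual ℝ ↥(LinearMap.ker B)) :
    reflEquiv (formT B Vdot hc) (a, 0) (v, l)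
      = (v - (2 / B a a * (B v a + l (projRad B Vdot hc a))) • a, l) := by
  rw [reflEquiv_apply, reflMap_apply, formT_diag]
  have h1 : formT B Vdot hc (v, l) (a, 0) = B v a + l (projRad B Vdot hc a) := by
    rw [formT_apply']
    simp
  rw [h1]
  have h2 : (2 / B a a * (B v a + l (projRad B Vdot hc a))) • ((a, 0) : VT B)
      = ((2 / B a a * (B v a + l (projRad B Vdot hc a))) • a, 0) := by
    rw [Prod.smul_mk, smul_zero]
  rw [h2, Prod.mk_sub_mk, sub_zero]

/-- Invariant properties of elements of the extended affine Weyl group. -/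
structure TProps (B : LinearMap.BilinForm ℝ V) (R : Set V) (Vdot : Submodule ℝ V)
    (hc : IsCompl (LinearMap.ker B) Vdot) (c : ℝ) (w : VT B ≃ₗ[ℝ] VT B) : Prop where
  snd : ∀ p : VT B, (w p).2 = p.2
  uwv : ∃ u ∈ weylOn B (nonIso B R), ∀ v : V, (w (v, 0)).1 = u v
  kap : kfun w ∈ MM B R Vdot hc c

lemma TProps.decomp {c : ℝ} {w : VT B ≃ₗ[ℝ] VT B} (hw : TProps B R Vdot hcpl c w)
    {u : V ≃ₗ[ℝ] V} (hu : ∀ v : V, (w (v, 0)).1 = u v) :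
    ∀ (v : V) (l : Module.Dual ℝ ↥(LinearMap.ker B)),
      w (v, l) = (u v + kfun w l, l) := by
  intro v l
  have hsplit : ((v, l) : VT B) = (v, 0) + (0, l) := by
    rw [Prod.mk_add_mk, add_zero, zero_add]
  have h1 : w (v, 0) = (u v, 0) := Prod.ext (hu v) (hw.snd (v, 0))
  have h2 : w (0, l) = (kfun w l, l) := Prod.ext rfl (hw.snd (0, l))
  rw [hsplit, map_add, h1, h2, Prod.mk_add_mk, zero_add]

lemma MM_comp {c : ℝ} {u : V ≃ₗ[ℝ] V}
    (hu : ∀ x ∈ Submodule.span ℤ R, u x ∈ Submodule.span ℤ R)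
    {g : Module.Dual ℝ ↥(LinearMap.ker B) → V} (hg : g ∈ MM B R Vdot hcpl c) :
    (fun l => u (g l)) ∈ MM B R Vdot hcpl c := by
  induction hg using Submodule.span_induction with
  | mem g hgen =>
    obtain ⟨x, hx, y, hy, rfl⟩ := hgen
    apply Submodule.subset_span
    refine ⟨x, hx, u y, hu y hy, ?_⟩
    funext l
    simp [map_smul]
  | zero =>
    have he : (fun l => u ((0 : Module.Dual ℝ ↥(LinearMap.ker B) → V) l))
        = (0 : Module.Dual ℝ ↥(LinearMap.ker B) → V) := by
      funext l; simp
    rw [he]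
    exact Submodule.zero_mem _
  | add g g' _ _ ihg ihg' =>
    have he : (fun l => u ((g + g') l)) = (fun l => u (g l)) + (fun l => u (g' l)) := by
      funext l; simp
    rw [he]
    exact Submodule.add_mem _ ihg ihg'
  | smul z g _ ih =>
    have he : (fun l => u ((z • g) l)) = z • (fun l => u (g l)) := by
      funext l
      simp [map_zsmul]
    rw [he]
    exact Submodule.smul_mem _ z ih

lemma masterT (hR : IsEARS B R) {a₀ : V} (ha₀ : a₀ ∈ nonIso B R) :
    ∀ w ∈ weylTilde B Vdot hcpl (nonIso B R),
      TProps B R Vdot hcpl (B a₀ a₀) w ∧ TProps B R Vdot hcpl (B a₀ a₀) w⁻¹ := by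
  have hc0 : (0:ℝ) < B a₀ a₀ := lt_of_le_of_ne (hR.posSemidef a₀) (Ne.symm ha₀.2)
  have hone : TProps B R Vdot hcpl (B a₀ a₀) 1 := by
    refine ⟨fun p => rfl, ⟨1, Subgroup.one_mem _, fun v => rfl⟩, ?_⟩
    have he : kfun (1 : VT B ≃ₗ[ℝ] VT B) = 0 := by funext l; rfl
    rw [he]
    exact Submodule.zero_mem _
  have hmul : ∀ w w' : VT B ≃ₗ[ℝ] VT B, TProps B R Vdot hcpl (B a₀ a₀) w →
      TProps B R Vdot hcpl (B a₀ a₀) w' → TProps B R Vdot hcpl (B a₀ a₀) (w * w') := by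
    intro w w' hw hw'
    obtain ⟨u, huW, hu⟩ := hw.uwv
    obtain ⟨u', huW', hu'⟩ := hw'.uwv
    have hd := hw.decomp hu
    have hd' := hw'.decomp hu'
    refine ⟨fun p => ?_, ⟨u * u', Subgroup.mul_mem _ huW huW', fun v => ?_⟩, ?_⟩
    · show (w (w' p)).2 = p.2
      rw [hw.snd (w' p), hw'.snd p]
    · show (w (w' (v, 0))).1 = u (u' v)
      have he : w' (v, 0) = (u' v, 0) := Prod.ext (hu' v) (hw'.snd (v, 0))
      rw [he, hu (u' v)]
    · have he : kfun (w * w') = (fun l => u (kfun w' l)) + kfun w := by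
        funext l
        show (w (w' (0, l))).1 = _
        have h1 : w' (0, l) = (kfun w' l, l) := Prod.ext rfl (hw'.snd (0, l))
        rw [h1, hd (kfun w' l) l]
        show u (kfun w' l) + kfun w l = _
        rfl
      rw [he]
      exact Submodule.add_mem _
        (MM_comp ((wv_props hR u huW).1).latt hw'.kap) hw.kap
  have hgen : ∀ a ∈ nonIso B R,
      TProps B R Vdot hcpl (B a₀ a₀) (reflEquiv (formT B Vdot hcpl) (a, 0)) := by
    intro a ha
    have hBa : B a a ≠ 0 := ha.2
    obtain ⟨m, hm0, _, hm⟩ := length_int hR ha₀ ha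
    refine ⟨fun p => ?_, ⟨reflEquiv B a, refl_mem_weylOn ha, fun v => ?_⟩, ?_⟩
    · have := reflT_apply B Vdot hcpl a p.1 p.2
      rw [Prod.mk.eta] at this
      rw [this]
    · rw [reflT_apply]
      show v - (2 / B a a * (B v a + (0 : Module.Dual ℝ ↥(LinearMap.ker B))
        (projRad B Vdot hcpl a))) • a = _
      rw [reflEquiv_apply, reflMap_apply]
      simp
    · have hsc : 2 / B a a = 1/(6 * B a₀ a₀) * (m : ℝ) := by
        field_simp
        linarith
      have he : kfun (reflEquiv (formT B Vdot hcpl) (a, 0))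
          = -(fun l => (l (projRad B Vdot hcpl a) * (1/(6 * B a₀ a₀))) • ((m • a : V))) := by
        funext l
        show (reflEquiv (formT B Vdot hcpl) (a, 0) (0, l)).1 = _
        rw [reflT_apply]
        show (0 : V) - (2 / B a a * (B 0 a + l (projRad B Vdot hcpl a))) • a = _
        have hz : B (0 : V) a = 0 := by simp
        rw [hz, zero_add, zero_sub]
        have hms : (m • a : V) = (m : ℝ) • a := (Int.cast_smul_eq_zsmul ℝ m a).symm
        rw [Pi.neg_apply, hms, smul_smul]
        congr 1
        rw [hsc]
        ring
      rw [he]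
      exact Submodule.neg_mem _ (Submodule.subset_span
        ⟨a, Submodule.subset_span ha.1, m • a,
          Submodule.smul_mem _ m (Submodule.subset_span ha.1), rfl⟩)
  intro w hw
  induction hw using Subgroup.closure_induction with
  | mem x hx =>
    obtain ⟨a, ha, rfl⟩ := hx
    refine ⟨hgen a ha, ?_⟩
    rw [reflEquiv_inv]
    exact hgen a ha
  | one => exact ⟨hone, by rw [inv_one]; exact hone⟩
  | mul x y _ _ ihx ihy =>
    refine ⟨hmul x y ihx.1 ihy.1, ?_⟩
    rw [mul_inv_rev]
    exact hmul _ _ ihy.2 ihx.2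
  | inv x _ ih => exact ⟨ih.2, by rw [inv_inv]; exact ih.1⟩

lemma liftWV (hR : IsEARS B R) :
    ∀ u ∈ weylOn B (nonIso B R), ∃ w ∈ weylTilde B Vdot hcpl (nonIso B R),
      ∀ v : V, w (v, (0 : Module.Dual ℝ ↥(LinearMap.ker B))) = (u v, 0) := by
  intro u hu
  induction hu using Subgroup.closure_induction with
  | mem x hx =>
    obtain ⟨a, ha, rfl⟩ := hx
    refine ⟨reflEquiv (formT B Vdot hcpl) (a, 0), reflT_mem_weylTilde B Vdot hcpl ha,
      fun v => ?_⟩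
    rw [reflT_apply]
    refine Prod.ext ?_ rfl
    show v - (2 / B a a * (B v a + (0 : Module.Dual ℝ ↥(LinearMap.ker B))
      (projRad B Vdot hcpl a))) • a = _
    rw [reflEquiv_apply, reflMap_apply]
    simp
  | one => exact ⟨1, Subgroup.one_mem _, fun v => rfl⟩
  | mul x y _ _ ihx ihy =>
    obtain ⟨w, hw, hwf⟩ := ihx
    obtain ⟨w', hw', hw'f⟩ := ihy
    refine ⟨w * w', Subgroup.mul_mem _ hw hw', fun v => ?_⟩
    show w (w' (v, 0)) = ((x * y) v, 0)
    rw [hw'f v]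
    exact hwf (y v)
  | inv x _ ih =>
    obtain ⟨w, hw, hwf⟩ := ih
    refine ⟨w⁻¹, Subgroup.inv_mem _ hw, fun v => ?_⟩
    have h1 : w (x⁻¹ v, (0 : Module.Dual ℝ ↥(LinearMap.ker B))) = (v, 0) := by
      rw [hwf (x⁻¹ v)]
      congr 1
      have : (x * x⁻¹) v = v := by rw [mul_inv_cancel]; rfl
      exact this
    have h2 : w⁻¹ (w (x⁻¹ v, (0 : Module.Dual ℝ ↥(LinearMap.ker B))))
        = (x⁻¹ v, (0 : Module.Dual ℝ ↥(LinearMap.ker B))) := by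
      have : (w⁻¹ * w) (x⁻¹ v, (0 : Module.Dual ℝ ↥(LinearMap.ker B)))
          = (x⁻¹ v, (0 : Module.Dual ℝ ↥(LinearMap.ker B))) := by
        rw [inv_mul_cancel]; rfl
      exact this
    rw [h1] at h2
    exact h2

end Tilde

section TildeFG

variable {B : LinearMap.BilinForm ℝ V} {R : Set V}
variable {Vdot : Submodule ℝ V} {hcpl : IsCompl (LinearMap.ker B) Vdot}

set_option maxHeartbeats 1000000 in
lemma weylTilde_fg [FiniteDimensional ℝ V] (hR : IsEARS B R) :
    ∃ S : Finset (VT B ≃ₗ[ℝ] VT B),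
      ↑S ⊆ (weylTilde B Vdot hcpl (nonIso B R) : Set (VT B ≃ₗ[ℝ] VT B)) ∧
      weylTilde B Vdot hcpl (nonIso B R) ≤
        Subgroup.closure (S : Set (VT B ≃ₗ[ℝ] VT B)) := by
  classical
  rcases Set.eq_empty_or_nonempty (nonIso B R) with hemp | ⟨a₀, ha₀⟩
  · refine ⟨∅, by simp, ?_⟩
    rw [weylTilde, hemp]
    simp
  have hc0 : (0:ℝ) < B a₀ a₀ := lt_of_le_of_ne (hR.posSemidef a₀) (Ne.symm ha₀.2)
  set c := B a₀ a₀ with hc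
  obtain ⟨s, hli, hsp, hcl⟩ := hR.lattice
  have hsfin : s.Finite := hli.setFinite
  haveI := hsfin.fintype
  have hspan_eq : Submodule.span ℤ R = Submodule.span ℤ s := span_R_eq_span_s hcl
  have hsL : ∀ i : s, (i : V) ∈ Submodule.span ℤ R := fun i => by
    rw [hspan_eq]; exact Submodule.subset_span i.2
  -- MM is finitely generated
  have hMMfg : (MM B R Vdot hcpl c).FG := by
    have heq : MM B R Vdot hcpl c = Submodule.span ℤ
        (Set.range (fun p : s × s =>
          (fun l : Module.Dual ℝ ↥(LinearMap.ker B) => (l (projRad B Vdot hcpl p.1) * (1/(6*c))) • (p.2 : V) :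
            Module.Dual ℝ ↥(LinearMap.ker B) → V))) := by
      apply le_antisymm
      · rw [MM, Submodule.span_le]
        rintro g ⟨x, hx, y, hy, rfl⟩
        rw [hspan_eq] at hx hy
        induction hx using Submodule.span_induction with
        | mem x hxs =>
          induction hy using Submodule.span_induction with
          | mem y hys =>
            exact Submodule.subset_span ⟨(⟨x, hxs⟩, ⟨y, hys⟩), rfl⟩
          | zero =>
            have he : (fun l : Module.Dual ℝ ↥(LinearMap.ker B) => (l (projRad B Vdot hcpl x) * (1/(6*c))) • (0:V))
                = (0 : Module.Dual ℝ ↥(LinearMap.ker B) → V) := by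
              funext l; simp
            rw [he]; exact Submodule.zero_mem _
          | add y z hy hz ihy ihz =>
            have he : (fun l : Module.Dual ℝ ↥(LinearMap.ker B) => (l (projRad B Vdot hcpl x) * (1/(6*c))) • (y + z))
                = (fun l : Module.Dual ℝ ↥(LinearMap.ker B) => (l (projRad B Vdot hcpl x) * (1/(6*c))) • y)
                  + (fun l : Module.Dual ℝ ↥(LinearMap.ker B) => (l (projRad B Vdot hcpl x) * (1/(6*c))) • z) := by
              funext l; simp [smul_add]
            rw [he]; exact Submodule.add_mem _ ihy ihz
          | smul z y hy ih =>
            have he : (fun l : Module.Dual ℝ ↥(LinearMap.ker B) => (l (projRad B Vdot hcpl x) * (1/(6*c))) • (z • y))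
                = z • (fun l : Module.Dual ℝ ↥(LinearMap.ker B) => (l (projRad B Vdot hcpl x) * (1/(6*c))) • y) := by
              funext l
              simp only [Pi.smul_apply]
              module
            rw [he]; exact Submodule.smul_mem _ z ih
        | zero =>
          have he : (fun l : Module.Dual ℝ ↥(LinearMap.ker B) => (l (projRad B Vdot hcpl 0) * (1/(6*c))) • y)
              = (0 : Module.Dual ℝ ↥(LinearMap.ker B) → V) := by
            funext l; simp
          rw [he]; exact Submodule.zero_mem _
        | add x z hx hz ihx ihz =>
          have he : (fun l : Module.Dual ℝ ↥(LinearMap.ker B) => (l (projRad B Vdot hcpl (x + z)) * (1/(6*c))) • y)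
              = (fun l : Module.Dual ℝ ↥(LinearMap.ker B) => (l (projRad B Vdot hcpl x) * (1/(6*c))) • y)
                + (fun l : Module.Dual ℝ ↥(LinearMap.ker B) => (l (projRad B Vdot hcpl z) * (1/(6*c))) • y) := by
            funext l
            simp only [map_add, Pi.add_apply]
            rw [add_mul, add_smul]
          rw [he]; exact Submodule.add_mem _ ihx ihz
        | smul z x hx ih =>
          have he : (fun l : Module.Dual ℝ ↥(LinearMap.ker B) => (l (projRad B Vdot hcpl (z • x)) * (1/(6*c))) • y)
              = z • (fun l : Module.Dual ℝ ↥(LinearMap.ker B) => (l (projRad B Vdot hcpl x) * (1/(6*c))) • y) := by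
            funext l
            simp only [map_zsmul, Pi.smul_apply, smul_eq_mul, zsmul_eq_mul]
            module
          rw [he]; exact Submodule.smul_mem _ z ih
      · rw [Submodule.span_le]
        rintro g ⟨p, rfl⟩
        apply Submodule.subset_span
        exact ⟨p.1, hsL p.1, p.2, hsL p.2, rfl⟩
    rw [heq]
    exact Submodule.fg_span (Set.finite_range _)
  -- the subgroup NT
  set WT := weylTilde B Vdot hcpl (nonIso B R) with hWT
  set NT : Subgroup (VT B ≃ₗ[ℝ] VT B) :=
    { carrier := {w | w ∈ WT ∧ ∀ v : V,
        w (v, (0 : Module.Dual ℝ ↥(LinearMap.ker B))) = (v, 0)}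
      mul_mem' := by
        rintro w u ⟨hwW, hw⟩ ⟨huW, hu⟩
        refine ⟨Subgroup.mul_mem _ hwW huW, fun v => ?_⟩
        show w (u (v, 0)) = (v, 0)
        rw [hu v, hw v]
      one_mem' := ⟨Subgroup.one_mem _, fun v => rfl⟩
      inv_mem' := by
        rintro w ⟨hwW, hw⟩
        refine ⟨Subgroup.inv_mem _ hwW, fun v => ?_⟩
        have h1 : w⁻¹ (w (v, (0 : Module.Dual ℝ ↥(LinearMap.ker B)))) = (v, 0) := by
          have : (w⁻¹ * w) ((v, 0) : VT B) = (v, 0) := by rw [inv_mul_cancel]; rfl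
          exact this
        rw [hw v] at h1
        exact h1 } with hNT
  -- NT is finitely generated
  obtain ⟨SN, hSNsub, hSNle⟩ :
      ∃ SN : Finset (VT B ≃ₗ[ℝ] VT B), ↑SN ⊆ (NT : Set (VT B ≃ₗ[ℝ] VT B)) ∧
        NT ≤ Subgroup.closure (SN : Set (VT B ≃ₗ[ℝ] VT B)) := by
    refine subgroup_fg_of_embed NT kfun ?_ ?_ (MM B R Vdot hcpl c) hMMfg ?_
    · rintro w ⟨hwW, hw⟩ u ⟨huW, hu⟩
      funext l
      show ((w * u) ((0 : V), l)).1 = kfun w l + kfun u l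
      have h1 : u ((0 : V), l) = (kfun u l, l) :=
        Prod.ext rfl (((masterT hR ha₀ u huW).1).snd (0, l))
      show (w (u (0, l))).1 = _
      rw [h1]
      have hsplit : ((kfun u l, l) : VT B) = (kfun u l, 0) + (0, l) := by
        rw [Prod.mk_add_mk, add_zero, zero_add]
      rw [hsplit, map_add, hw (kfun u l), Prod.fst_add]
      show kfun u l + kfun w l = _
      rw [add_comm]
    · rintro w ⟨hwW, hw⟩ u ⟨huW, hu⟩ hke
      have hext : ∀ p : VT B, w p = u p := by
        intro p
        have hsplit : (p : VT B) = (p.1, 0) + (0, p.2) := by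
          rw [Prod.mk_add_mk, add_zero, zero_add]
        have h2 : w ((0 : V), p.2) = (kfun w p.2, p.2) :=
          Prod.ext rfl (((masterT hR ha₀ w hwW).1).snd _)
        have h2' : u ((0 : V), p.2) = (kfun u p.2, p.2) :=
          Prod.ext rfl (((masterT hR ha₀ u huW).1).snd _)
        conv_lhs => rw [hsplit]
        conv_rhs => rw [hsplit]
        rw [map_add, map_add, hw p.1, hu p.1, h2, h2', hke]
      exact LinearEquiv.toLinearMap_injective (LinearMap.ext hext)
    · rintro w ⟨hwW, _⟩
      exact ((masterT hR ha₀ w hwW).1).kap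
  -- lift the generators of the Weyl group on V
  obtain ⟨SV, hSVsub, hSVle⟩ := weylOn_fg hR
  set liftf : (V ≃ₗ[ℝ] V) → (VT B ≃ₗ[ℝ] VT B) := fun u =>
    if h : u ∈ weylOn B (nonIso B R) then
      (liftWV (Vdot := Vdot) (hcpl := hcpl) hR u h).choose else 1
    with hliftf
  have hlift : ∀ u, ∀ h : u ∈ weylOn B (nonIso B R), liftf u ∈ WT ∧
      ∀ v : V, (liftf u) (v, (0 : Module.Dual ℝ ↥(LinearMap.ker B))) = (u v, 0) := by
    intro u h
    have he : liftf u = (liftWV (Vdot := Vdot) (hcpl := hcpl) hR u h).choose := by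
      rw [hliftf]; exact dif_pos h
    rw [he]
    exact (liftWV (Vdot := Vdot) (hcpl := hcpl) hR u h).choose_spec
  set Shat := SV.image liftf with hShat
  have hShatsub : (Shat : Set (VT B ≃ₗ[ℝ] VT B)) ⊆ (WT : Set (VT B ≃ₗ[ℝ] VT B)) := by
    intro g hg
    rw [hShat, Finset.coe_image] at hg
    obtain ⟨u, hu, rfl⟩ := hg
    exact (hlift u (hSVsub hu)).1
  have hlift2 : ∀ u ∈ Subgroup.closure (SV : Set (V ≃ₗ[ℝ] V)),
      ∃ w ∈ Subgroup.closure (Shat : Set (VT B ≃ₗ[ℝ] VT B)),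
        ∀ v : V, w (v, (0 : Module.Dual ℝ ↥(LinearMap.ker B))) = (u v, 0) := by
    intro u hu
    induction hu using Subgroup.closure_induction with
    | mem x hx =>
      refine ⟨liftf x, Subgroup.subset_closure ?_, (hlift x (hSVsub hx)).2⟩
      rw [hShat, Finset.coe_image]
      exact Set.mem_image_of_mem liftf hx
    | one => exact ⟨1, Subgroup.one_mem _, fun v => rfl⟩
    | mul x y _ _ ihx ihy =>
      obtain ⟨w, hw, hwf⟩ := ihx
      obtain ⟨w', hw', hw'f⟩ := ihy
      refine ⟨w * w', Subgroup.mul_mem _ hw hw', fun v => ?_⟩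
      show w (w' (v, 0)) = ((x * y) v, 0)
      rw [hw'f v]
      exact hwf (y v)
    | inv x _ ih =>
      obtain ⟨w, hw, hwf⟩ := ih
      refine ⟨w⁻¹, Subgroup.inv_mem _ hw, fun v => ?_⟩
      have h1 : w (x⁻¹ v, (0 : Module.Dual ℝ ↥(LinearMap.ker B))) = (v, 0) := by
        rw [hwf (x⁻¹ v)]
        congr 1
        have h4 : (x * x⁻¹) v = v := by rw [mul_inv_cancel]; rfl
        exact h4
      have h2 : w⁻¹ (w (x⁻¹ v, (0 : Module.Dual ℝ ↥(LinearMap.ker B))))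
          = (x⁻¹ v, (0 : Module.Dual ℝ ↥(LinearMap.ker B))) := by
        have h5 : (w⁻¹ * w) ((x⁻¹ v, (0 : Module.Dual ℝ ↥(LinearMap.ker B))) : VT B)
            = (x⁻¹ v, (0 : Module.Dual ℝ ↥(LinearMap.ker B))) := by
          rw [inv_mul_cancel]; rfl
        exact h5
      rw [h1] at h2
      exact h2
  refine ⟨Shat ∪ SN, ?_, ?_⟩
  · rw [Finset.coe_union]
    exact Set.union_subset hShatsub (fun g hg => (hSNsub hg).1)
  · intro w hw
    obtain ⟨u, huW, hufst⟩ := ((masterT hR ha₀ w hw).1).uwv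
    obtain ⟨w', hw', hw'f⟩ := hlift2 u (hSVle huW)
    have hw'WT : w' ∈ WT := (Subgroup.closure_le WT).mpr hShatsub hw'
    have hg : w'⁻¹ * w ∈ NT := by
      refine ⟨Subgroup.mul_mem _ (Subgroup.inv_mem _ hw'WT) hw, fun v => ?_⟩
      have h1 : w (v, (0 : Module.Dual ℝ ↥(LinearMap.ker B))) = (u v, 0) :=
        Prod.ext (hufst v) (((masterT hR ha₀ w hw).1).snd _)
      show w'⁻¹ (w (v, 0)) = (v, 0)
      rw [h1]
      have h2 : w'⁻¹ (w' ((v, (0 : Module.Dual ℝ ↥(LinearMap.ker B))) : VT B))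
          = (v, (0 : Module.Dual ℝ ↥(LinearMap.ker B))) := by
        have h5 : (w'⁻¹ * w') ((v, (0 : Module.Dual ℝ ↥(LinearMap.ker B))) : VT B)
            = (v, (0 : Module.Dual ℝ ↥(LinearMap.ker B))) := by
          rw [inv_mul_cancel]; rfl
        exact h5
      rw [hw'f v] at h2
      exact h2
    have hcl1 : Subgroup.closure (Shat : Set (VT B ≃ₗ[ℝ] VT B)) ≤
        Subgroup.closure ((Shat ∪ SN : Finset (VT B ≃ₗ[ℝ] VT B)) : Set (VT B ≃ₗ[ℝ] VT B)) :=
      Subgroup.closure_mono (by rw [Finset.coe_union]; exact Set.subset_union_left)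
    have hcl2 : Subgroup.closure (SN : Set (VT B ≃ₗ[ℝ] VT B)) ≤
        Subgroup.closure ((Shat ∪ SN : Finset (VT B ≃ₗ[ℝ] VT B)) : Set (VT B ≃ₗ[ℝ] VT B)) :=
      Subgroup.closure_mono (by rw [Finset.coe_union]; exact Set.subset_union_right)
    have hfin : w = w' * (w'⁻¹ * w) := by group
    rw [hfin]
    exact Subgroup.mul_mem _ (hcl1 hw') (hcl2 (hSNle hg))

end TildeFG

section PartA

variable {B : LinearMap.BilinForm ℝ V} {R : Set V}
variable {Vdot : Submodule ℝ V} {hcpl : IsCompl (LinearMap.ker B) Vdot}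

lemma partA [FiniteDimensional ℝ V] (hR : IsEARS B R) :
    ∀ P ⊆ nonIso B R,
      weylTilde B Vdot hcpl P = weylTilde B Vdot hcpl (nonIso B R) →
      (∀ Q ⊆ P, Q ≠ P → weylTilde B Vdot hcpl Q ≠ weylTilde B Vdot hcpl (nonIso B R)) →
      P.Finite := by
  intro P hPsub hPeq hmin
  classical
  obtain ⟨S, hSsub, hSle⟩ := weylTilde_fg (Vdot := Vdot) (hcpl := hcpl) hR
  have hgen : ∀ g ∈ S, ∃ F : Finset V, ↑F ⊆ P ∧
      g ∈ Subgroup.closure ((fun a => reflEquiv (formT B Vdot hcpl) (a, 0)) '' (F : Set V)) := by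
    intro g hg
    have hgP : g ∈ weylTilde B Vdot hcpl P := by
      rw [hPeq]
      exact hSsub hg
    exact mem_closure_image_finite hgP
  choose Ff hFsub hFmem using hgen
  set F : Finset V := S.attach.biUnion (fun g => Ff g.1 g.2) with hF
  have hFP : ↑F ⊆ P := by
    intro x hx
    rw [hF] at hx
    simp only [Finset.coe_biUnion, Set.mem_iUnion, Finset.mem_coe] at hx
    obtain ⟨g, _, hxg⟩ := hx
    exact hFsub g.1 g.2 hxg
  have hWF : weylTilde B Vdot hcpl ↑F = weylTilde B Vdot hcpl (nonIso B R) := by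
    apply le_antisymm
    · exact Subgroup.closure_mono (Set.image_mono (hFP.trans hPsub))
    · refine le_trans hSle ((Subgroup.closure_le _).mpr ?_)
      intro g hg
      have hsubF : (Ff g hg : Set V) ⊆ (F : Set V) := by
        intro x hx
        rw [hF]
        simp only [Finset.coe_biUnion, Set.mem_iUnion, Finset.mem_coe]
        exact ⟨⟨g, hg⟩, Finset.mem_attach _ _, hx⟩
      exact Subgroup.closure_mono (Set.image_mono hsubF) (hFmem g hg)
  rcases eq_or_ne ((F : Set V)) P with he | hne
  · rw [← he]
    exact F.finite_toSet
  · exact absurd hWF (hmin ↑F hFP hne)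

end PartA

section OrbitLemmas

variable {B : LinearMap.BilinForm ℝ V} {R : Set V}

lemma refl_conj (hR : IsEARS B R) {w : V ≃ₗ[ℝ] V} (hw : w ∈ weylOn B (nonIso B R))
    {p : V} : reflEquiv B (w p) = w * reflEquiv B p * w⁻¹ := by
  have hprops := (wv_props hR w hw).1
  ext x
  show reflMap B (w p) x = w (reflMap B p (w⁻¹ x))
  rw [reflMap_apply, reflMap_apply, map_sub, map_smul]
  have h1 : w (w⁻¹ x) = x := by
    have h5 : (w * w⁻¹) x = x := by rw [mul_inv_cancel]; rfl
    exact h5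
  rw [h1]
  have h2 : B (w p) (w p) = B p p := hprops.isom p p
  have h3 : B x (w p) = B (w⁻¹ x) p := by
    conv_lhs => rw [← h1]
    exact hprops.isom (w⁻¹ x) p
  rw [h2, h3]

lemma trans_formula (hR : IsEARS B R) {a σ : V} (ha : a ∈ nonIso B R)
    (haσ : a + σ ∈ nonIso B R) (hσ : B σ = 0) :
    ∀ x : V, (reflEquiv B (a + σ) * reflEquiv B a) x = x + (2 * B x a / B a a) • σ := by
  intro x
  have hsym := hR.symm
  have hBσx : ∀ y, B σ y = 0 := fun y => by rw [hσ]; rfl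
  have hxσ : ∀ y, B y σ = 0 := fun y => by rw [hsym]; exact hBσx y
  have hBaσa : B (a + σ) (a + σ) = B a a := by
    have e1 : B (a + σ) (a + σ) = B a a + B a σ + (B σ a + B σ σ) := by
      simp [map_add, LinearMap.add_apply]
      ring
    rw [e1, hxσ a, hBσx a, hBσx σ]
    ring
  show reflMap B (a + σ) (reflMap B a x) = _
  rw [reflMap_apply, reflMap_apply, hBaσa]
  have hBxa' : B (x - (2 / B a a * B x a) • a) (a + σ) = - B x a := by
    have e2 : B (x - (2 / B a a * B x a) • a) (a + σ)
        = B x a + B x σ - (2 / B a a * B x a) * (B a a + B a σ) := by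
      simp [map_sub, map_smul, LinearMap.sub_apply, LinearMap.smul_apply, smul_eq_mul]
      try ring
    rw [e2, hxσ x, hxσ a]
    field_simp [ha.2]
    ring
  rw [hBxa']
  match_scalars <;> ring

lemma orbit_twice (hR : IsEARS B R) {a : V} (ha : a ∈ nonIso B R) :
    ∀ μ ∈ AddSubgroup.closure {σ : V | a + σ ∈ nonIso B R ∧ B σ = 0},
      ∃ w ∈ weylOn B (nonIso B R), w a = a + (2:ℝ) • μ := by
  intro μ hμ
  set SG : AddSubgroup V :=
    { carrier := {μ | B μ = 0 ∧ ∃ w ∈ weylOn B (nonIso B R),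
        ∀ x, w x = x + (2 * B x a / B a a) • μ}
      zero_mem' := ⟨map_zero B, 1, Subgroup.one_mem _, fun x => by simp⟩
      add_mem' := by
        rintro μ ν ⟨hμ0, w, hwW, hw⟩ ⟨hν0, u, huW, hu⟩
        refine ⟨by rw [map_add, hμ0, hν0, add_zero], w * u,
          Subgroup.mul_mem _ hwW huW, fun x => ?_⟩
        show w (u x) = _
        rw [hu x, hw (x + _)]
        have hνa : B ν a = 0 := by rw [hν0]; rfl
        have hBx : B (x + (2 * B x a / B a a) • ν) a = B x a := by
          simp only [map_add, LinearMap.add_apply, map_smul, LinearMap.smul_apply,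
            smul_eq_mul, hνa]
          ring
        rw [hBx, smul_add]
        abel
      neg_mem' := by
        rintro μ ⟨hμ0, w, hwW, hw⟩
        refine ⟨by rw [map_neg, hμ0, neg_zero], w⁻¹, Subgroup.inv_mem _ hwW, fun x => ?_⟩
        have h1 := hw (w⁻¹ x)
        have h2 : w (w⁻¹ x) = x := by
          have h5 : (w * w⁻¹) x = x := by rw [mul_inv_cancel]; rfl
          exact h5
        rw [h2] at h1
        have hμa : B μ a = 0 := by rw [hμ0]; rfl
        have h3 : B (w⁻¹ x) a = B x a := by
          conv_rhs => rw [h1]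
          simp only [map_add, LinearMap.add_apply, map_smul, LinearMap.smul_apply,
            smul_eq_mul, hμa]
          ring
        rw [h3] at h1
        have he : w⁻¹ x = x - (2 * B x a / B a a) • μ :=
          ((sub_eq_iff_eq_add).mpr h1).symm
        rw [he, smul_neg]
        abel } with hSG
  have hle : AddSubgroup.closure {σ : V | a + σ ∈ nonIso B R ∧ B σ = 0} ≤ SG := by
    rw [AddSubgroup.closure_le]
    rintro σ ⟨hσR, hσ0⟩
    exact ⟨hσ0, reflEquiv B (a + σ) * reflEquiv B a,
      Subgroup.mul_mem _ (refl_mem_weylOn hσR) (refl_mem_weylOn ha),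
      trans_formula hR ha hσR hσ0⟩
  obtain ⟨hμ0, w, hwW, hw⟩ := hle hμ
  refine ⟨w, hwW, ?_⟩
  rw [hw a]
  congr 1
  rw [mul_div_assoc, div_self ha.2, mul_one]

end OrbitLemmas

section PartB

variable {B : LinearMap.BilinForm ℝ V} {R : Set V}

set_option maxHeartbeats 1000000 in
lemma partB [FiniteDimensional ℝ V] (hR : IsEARS B R) (P : Set V)
    (hbase : IsReflBase B R P) : P.Finite := by
  classical
  obtain ⟨⟨hPsub, hPorb⟩, hmin⟩ := hbase
  rcases Set.eq_empty_or_nonempty (nonIso B R) with hemp | ⟨a₀, ha₀⟩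
  · have hPe : P = ∅ := Set.subset_empty_iff.mp (hemp ▸ hPsub)
    rw [hPe]
    exact Set.finite_empty
  have hc0 : (0:ℝ) < B a₀ a₀ := lt_of_le_of_ne (hR.posSemidef a₀) (Ne.symm ha₀.2)
  obtain ⟨s, hli, hsp, hcl⟩ := hR.lattice
  have hsfin : s.Finite := hli.setFinite
  haveI := hsfin.fintype
  have hspan_eq : Submodule.span ℤ R = Submodule.span ℤ s := span_R_eq_span_s hcl
  have hLfg : (Submodule.span ℤ R).FG := by
    rw [hspan_eq]; exact Submodule.fg_span hsfin
  have hsL : ∀ i : s, (i : V) ∈ Submodule.span ℤ R := fun i => by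
    rw [hspan_eq]; exact Submodule.subset_span i.2
  set WV := weylOn B (nonIso B R) with hWV
  -- step (b1) : W_P = W_V
  have hWP : weylOn B P = WV := by
    apply le_antisymm (weylOn_mono hPsub)
    show weylOn B (nonIso B R) ≤ weylOn B P
    rw [weylOn, Subgroup.closure_le]
    rintro _ ⟨b, hb, rfl⟩
    rw [← hPorb] at hb
    obtain ⟨w, hwP, p, hp, rfl⟩ := hb
    have hwWV : w ∈ weylOn B (nonIso B R) := weylOn_mono hPsub hwP
    rw [refl_conj hR hwWV]
    exact Subgroup.mul_mem _ (Subgroup.mul_mem _ hwP (refl_mem_weylOn hp))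
      (Subgroup.inv_mem _ hwP)
  -- step (b2) : a finite F ⊆ P generating W_V
  obtain ⟨SV, hSVsub, hSVle⟩ := weylOn_fg hR
  have hgen : ∀ g ∈ SV, ∃ Fg : Finset V, ↑Fg ⊆ P ∧
      g ∈ Subgroup.closure (reflEquiv B '' (Fg : Set V)) := by
    intro g hg
    have hgP : g ∈ weylOn B P := by rw [hWP]; exact hSVsub hg
    exact mem_closure_image_finite hgP
  choose Ff hFsub hFmem using hgen
  set F : Finset V := SV.attach.biUnion (fun g => Ff g.1 g.2) with hF
  have hFP : ↑F ⊆ P := by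
    intro x hx
    rw [hF] at hx
    simp only [Finset.coe_biUnion, Set.mem_iUnion, Finset.mem_coe] at hx
    obtain ⟨g, _, hxg⟩ := hx
    exact hFsub g.1 g.2 hxg
  have hWF : ∀ Q : Set V, (↑F : Set V) ⊆ Q → Q ⊆ nonIso B R → weylOn B Q = WV := by
    intro Q hFQ hQsub
    apply le_antisymm (weylOn_mono hQsub)
    refine le_trans hSVle ((Subgroup.closure_le _).mpr ?_)
    intro g hg
    have hsubF : (Ff g hg : Set V) ⊆ Q := by
      refine subset_trans ?_ hFQ
      intro x hx
      rw [hF]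
      simp only [Finset.coe_biUnion, Set.mem_iUnion, Finset.mem_coe]
      exact ⟨⟨g, hg⟩, Finset.mem_attach _ _, hx⟩
    exact Subgroup.closure_mono (Set.image_mono hsubF) (hFmem g hg)
  -- key injectivity on orbits
  have hkey : ∀ p ∈ P \ (F : Set V), ∀ p' ∈ P \ (F : Set V),
      (∃ w ∈ WV, w p = p') → p = p' := by
    rintro p ⟨hpP, _⟩ p' ⟨hp'P, hp'F⟩ ⟨w₀, hw₀, hw₀p⟩
    by_contra hne
    have hQne : P \ {p'} ≠ P := by
      intro heq
      have hmem : p' ∈ P \ {p'} := by rw [heq]; exact hp'P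
      exact hmem.2 rfl
    apply hmin (P \ {p'}) Set.diff_subset hQne
    have hQsub : (P \ {p'} : Set V) ⊆ nonIso B R :=
      subset_trans Set.diff_subset hPsub
    have hFQ : (↑F : Set V) ⊆ P \ {p'} := by
      intro x hx
      refine ⟨hFP hx, fun hxp' => ?_⟩
      rw [Set.mem_singleton_iff] at hxp'
      exact hp'F (hxp' ▸ hx)
    have hWQ : weylOn B (P \ {p'}) = WV := hWF _ hFQ hQsub
    refine ⟨hQsub, ?_⟩
    apply Set.Subset.antisymm
    · rintro x ⟨w, hwQ, q, hq, rfl⟩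
      have hwWV : w ∈ weylOn B (nonIso B R) := weylOn_mono hQsub hwQ
      exact ((wv_props hR w hwWV).1).rmem q (hPsub hq.1)
    · intro b hb
      rw [← hPorb] at hb
      obtain ⟨w, hwP, q, hq, rfl⟩ := hb
      have hwWV : w ∈ WV := by rw [← hWP]; exact hwP
      rcases eq_or_ne q p' with hqe | hqne
      · refine ⟨w * w₀, ?_, p, ⟨hpP, fun h => hne h⟩, ?_⟩
        · rw [hWQ]; exact Subgroup.mul_mem _ hwWV hw₀
        · show w (w₀ p) = w q
          rw [hw₀p, hqe]
      · exact ⟨w, by rw [hWQ]; exact hwWV, q, ⟨hq, hqne⟩, rfl⟩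
  -- the Gram-data map
  set Ψ : V → (s → ℝ) := fun x => fun j => B x j with hΨdef
  have hfibker : ∀ x y : V, Ψ x = Ψ y → B (x - y) = 0 := by
    intro x y h
    apply LinearMap.ext_on hsp
    intro z hz
    have hxz : B x z = B y z := congrFun h ⟨z, hz⟩
    show B (x - y) z = (0 : V →ₗ[ℝ] ℝ) z
    simp only [map_sub, LinearMap.sub_apply, LinearMap.zero_apply, hxz, sub_self]
  have hΨim : (Ψ '' (nonIso B R)).Finite := by
    apply Set.Finite.subset (Set.Finite.pi (t := fun j : s =>
      {t : ℝ | (∃ k : ℤ, ((Nat.factorial 48 : ℤ):ℝ) * t = (k:ℝ) * B a₀ a₀) ∧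
        t^2 ≤ (12 * B a₀ a₀) * B j j}) (fun j => finite_vals hc0 _))
    rintro _ ⟨x, hx, rfl⟩
    rw [Set.mem_univ_pi]
    intro j
    refine ⟨B_int_on_L hR ha₀ x (Submodule.subset_span hx.1) _ (hsL j), ?_⟩
    have hcs := bilin_cs hR.symm hR.posSemidef x j
    have hlen := length_le hR ha₀ hx
    have hjj : (0:ℝ) ≤ B j j := hR.posSemidef j
    nlinarith
  -- fibers are finite
  have hfib : ∀ p₀ ∈ nonIso B R, {x | x ∈ P \ (F : Set V) ∧ Ψ x = Ψ p₀}.Finite := by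
    intro p₀ hp₀
    set Sa := {σ : V | p₀ + σ ∈ nonIso B R ∧ B σ = 0} with hSa
    set Λ : AddSubgroup V := AddSubgroup.closure Sa with hΛ
    have hΛle : AddSubgroup.toIntSubmodule Λ ≤ Submodule.span ℤ R := by
      intro z hz
      have hz' : z ∈ Λ := hz
      rw [hΛ] at hz'
      have hle2 : AddSubgroup.closure Sa ≤ (Submodule.span ℤ R).toAddSubgroup := by
        rw [AddSubgroup.closure_le]
        rintro σ ⟨hσR, hσ0⟩
        show σ ∈ Submodule.span ℤ R
        have he : σ = (p₀ + σ) - p₀ := by abel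
        rw [he]
        exact sub_mem (Submodule.subset_span hσR.1) (Submodule.subset_span hp₀.1)
      exact hle2 hz'
    have hΛfg : (AddSubgroup.toIntSubmodule Λ).FG := fg_of_le hLfg hΛle
    obtain ⟨Sg, hSg⟩ := hΛfg
    set twoΛ : AddSubgroup V :=
      AddSubgroup.map (AddMonoidHom.mk' (fun x : V => x + x) (fun a b => by abel)) Λ with h2Λ
    set π : V → V ⧸ twoΛ := QuotientAddGroup.mk with hπ
    have hπΛ : (π '' (Λ : Set V)).Finite := by
      apply Set.Finite.subset (Set.finite_range
        (fun ε : Sg → Bool => π (∑ i : Sg, if ε i then (i : V) else 0)))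
      rintro _ ⟨μ, hμ, rfl⟩
      have hμspan : μ ∈ Submodule.span ℤ (Set.range (fun i : Sg => (i : V))) := by
        rw [Subtype.range_coe_subtype]
        have hμ2 : μ ∈ AddSubgroup.toIntSubmodule Λ := hμ
        rw [← hSg] at hμ2
        simpa using hμ2
      rw [Submodule.mem_span_range_iff_exists_fun] at hμspan
      obtain ⟨cf, hcf⟩ := hμspan
      refine ⟨fun i => decide (cf i % 2 = 1), ?_⟩
      show π _ = π μ
      rw [hπ]
      apply (QuotientAddGroup.eq).mpr
      set ν : V := ∑ i : Sg, (cf i / 2) • (i : V) with hν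
      have hνΛ : ν ∈ Λ := by
        apply AddSubgroup.sum_mem
        intro i _
        apply AddSubgroup.zsmul_mem
        have hiΛ : (i : V) ∈ AddSubgroup.toIntSubmodule Λ := by
          rw [← hSg]; exact Submodule.subset_span i.2
        exact hiΛ
      refine ⟨ν, hνΛ, ?_⟩
      show ν + ν = _
      rw [← hcf, hν, ← Finset.sum_add_distrib]
      have hrhs : -(∑ i : Sg, if decide (cf i % 2 = 1) then (i:V) else 0)
          + (∑ i : Sg, cf i • (i:V))
          = ∑ i : Sg, (-(if decide (cf i % 2 = 1) then (i:V) else 0) + cf i • (i:V)) := by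
        rw [← Finset.sum_neg_distrib, ← Finset.sum_add_distrib]
      rw [hrhs]
      apply Finset.sum_congr rfl
      intro i _
      rcases Int.emod_two_eq_zero_or_one (cf i) with h | h
      · have hc2 : cf i / 2 + cf i / 2 = cf i := by omega
        have h3 : ((cf i / 2) + (cf i / 2)) • (i:V)
            = (cf i / 2) • (i:V) + (cf i / 2) • (i:V) := add_zsmul _ _ _
        have h4 : ((cf i / 2) + (cf i / 2)) • (i:V) = cf i • (i:V) := by rw [hc2]
        rw [← h4, h3]
        simp [h]
      · have hc2 : cf i / 2 + cf i / 2 + 1 = cf i := by omega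
        have h3 : ((cf i / 2) + (cf i / 2) + 1) • (i:V)
            = (cf i / 2) • (i:V) + (cf i / 2) • (i:V) + (i:V) := by
          rw [add_zsmul, add_zsmul, one_zsmul]
        have h4 : ((cf i / 2) + (cf i / 2) + 1) • (i:V) = cf i • (i:V) := by rw [hc2]
        rw [← h4, h3]
        simp only [h]
        norm_num
        try abel
    apply Set.Finite.of_finite_image (f := fun x => π (x - p₀))
    · apply Set.Finite.subset hπΛ
      rintro _ ⟨x, ⟨⟨hxP, _⟩, hxΨ⟩, rfl⟩
      refine ⟨x - p₀, ?_, rfl⟩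
      apply AddSubgroup.subset_closure
      constructor
      · have he : p₀ + (x - p₀) = x := by abel
        rw [he]
        exact hPsub hxP
      · exact hfibker x p₀ hxΨ
    · rintro x ⟨⟨hxP, hxF⟩, hxΨ⟩ y ⟨⟨hyP, hyF⟩, hyΨ⟩ hxy
      have hyx : -(x - p₀) + (y - p₀) ∈ twoΛ := (QuotientAddGroup.eq).mp hxy
      have h2 : y - x ∈ twoΛ := by
        have he : -(x - p₀) + (y - p₀) = y - x := by abel
        rwa [he] at hyx
      obtain ⟨μ, hμΛ, hμeq⟩ := h2
      have hΛx : Λ ≤ AddSubgroup.closure {σ : V | x + σ ∈ nonIso B R ∧ B σ = 0} := by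
        rw [hΛ, AddSubgroup.closure_le]
        rintro σ ⟨hσR, hσ0⟩
        have hxp₀ : B (x - p₀) = 0 := hfibker x p₀ hxΨ
        have h0 : B (p₀ - x) = 0 := by
          have he : p₀ - x = -(x - p₀) := by abel
          rw [he, map_neg, hxp₀, neg_zero]
        have hmem1 : (σ + (p₀ - x)) ∈ {σ : V | x + σ ∈ nonIso B R ∧ B σ = 0} := by
          constructor
          · have he : x + (σ + (p₀ - x)) = p₀ + σ := by abel
            rw [he]
            exact hσR
          · rw [map_add, hσ0, h0, add_zero]
        have hmem2 : (p₀ - x) ∈ {σ : V | x + σ ∈ nonIso B R ∧ B σ = 0} := by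
          constructor
          · have he : x + (p₀ - x) = p₀ := by abel
            rw [he]
            exact hp₀
          · exact h0
        have he : σ = (σ + (p₀ - x)) - (p₀ - x) := by abel
        rw [show σ = (σ + (p₀ - x)) - (p₀ - x) from he]
        exact sub_mem (AddSubgroup.subset_closure hmem1) (AddSubgroup.subset_closure hmem2)
      have hμx := hΛx hμΛ
      obtain ⟨w, hwWV, hwx⟩ := orbit_twice hR (hPsub hxP) μ hμx
      have hwxy : w x = y := by
        rw [hwx, two_smul]
        have hμeq' : μ + μ = y - x := hμeq
        rw [hμeq']
        abel
      exact hkey x ⟨hxP, hxF⟩ y ⟨hyP, hyF⟩ ⟨w, hwWV, hwxy⟩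
  -- conclusion
  have hPF : (P \ (F : Set V)).Finite := by
    have hcover : (P \ (F : Set V)) ⊆
        ⋃ y ∈ Ψ '' (nonIso B R), {x | x ∈ P \ (F : Set V) ∧ Ψ x = y} := by
      intro x hx
      simp only [Set.mem_iUnion]
      exact ⟨Ψ x, ⟨x, hPsub hx.1, rfl⟩, hx, rfl⟩
    apply Set.Finite.subset (Set.Finite.biUnion hΨim ?_) hcover
    intro y _
    rcases Set.eq_empty_or_nonempty {x | x ∈ P \ (F : Set V) ∧ Ψ x = y} with he | ⟨p₀, hp₀mem⟩
    · rw [he]; exact Set.finite_empty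
    · have hp₀R : p₀ ∈ nonIso B R := hPsub hp₀mem.1.1
      have heq : {x | x ∈ P \ (F : Set V) ∧ Ψ x = y}
          = {x | x ∈ P \ (F : Set V) ∧ Ψ x = Ψ p₀} := by
        ext z
        rw [Set.mem_setOf_eq, Set.mem_setOf_eq, hp₀mem.2]
      rw [heq]
      exact hfib p₀ hp₀R
  have hPdecomp : P = (F : Set V) ∪ (P \ (F : Set V)) :=
    (Set.union_diff_cancel hFP).symm
  rw [hPdecomp]
  exact (F.finite_toSet).union hPF

end PartB

/-- (a) Every S-minimal subset of `R^×` is finite.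
(b) Every reflectable base of `R` is finite. -/
theorem sMinimal_and_reflBase_finite
    {V : Type*} [AddCommGroup V] [Module ℝ V] [FiniteDimensional ℝ V]
    (B : LinearMap.BilinForm ℝ V) (R : Set V) (hR : IsEARS B R) (hred : IsReduced B R)
    (Vdot : Submodule ℝ V) (hc : IsCompl (LinearMap.ker B) Vdot) :
    (∀ P ⊆ nonIso B R,
      weylTilde B Vdot hc P = weylTilde B Vdot hc (nonIso B R) →
      (∀ Q ⊆ P, Q ≠ P → weylTilde B Vdot hc Q ≠ weylTilde B Vdot hc (nonIso B R)) →
      P.Finite) ∧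
    (∀ P : Set V, IsReflBase B R P → P.Finite) := by
  constructor
  · exact partA (Vdot := Vdot) (hcpl := hc) hR
  · intro P hP
    exact partB hR P hP

end EARSPaper
end
end

section
/- Let R be a reduced extended affine root system and let P ⊆ R^× be nonempty and connected. Set R_P^n = W_P·P, R_P^i = (R_P^n − R_P^n) ∩ R⁰, and R_P = R_P^n ∪ R_P^i. Then R_P is an extended affine root system in V_P = span_ℝ R_P (with the form restricted to V_P), satisfying (R_P)^× = R_P^n and (R_P)⁰ = R_P^i. -/
open Pointwise
open scoped Classical

noncomputable section

namespace EARSPaper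

variable {V : Type*} [AddCommGroup V] [Module ℝ V]

section Helpers

variable {B : LinearMap.BilinForm ℝ V} {R P : Set V}

theorem reflMap_isometry (B : LinearMap.BilinForm ℝ V) (hs : ∀ x y : V, B x y = B y x)
    (a x y : V) : B (reflMap B a x) (reflMap B a y) = B x y := by
  rcases eq_or_ne (B a a) 0 with h | h
  · simp [reflMap_apply, h]
  · rw [reflMap_apply, reflMap_apply]
    simp only [map_sub, map_smul, LinearMap.sub_apply, LinearMap.smul_apply, smul_eq_mul]
    have h1 : B a y = B y a := hs a y
    rw [h1]
    field_simp
    ring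

theorem mem_ker_of_self_eq_zero (B : LinearMap.BilinForm ℝ V)
    (hs : ∀ x y : V, B x y = B y x) (hp : ∀ x : V, 0 ≤ B x x) {x : V}
    (hx : B x x = 0) : x ∈ LinearMap.ker B := by
  rw [LinearMap.mem_ker]
  ext y
  simp only [LinearMap.zero_apply]
  by_contra hq
  set t : ℝ := -(B y y + 1) / (2 * B x y) with ht
  have h0 := hp (y + t • x)
  simp only [map_add, map_smul, LinearMap.add_apply, LinearMap.smul_apply, smul_eq_mul] at h0
  have hyx : B y x = B x y := hs y x
  have htx : t * B x y = -(B y y + 1) / 2 := by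
    rw [ht]; field_simp
  rw [hyx, hx] at h0
  nlinarith [h0]

/-- Every element of `weylOn B P` preserves the form and permutes `R`. -/
theorem weylOn_props (hR : IsEARS B R) (hPx : P ⊆ nonIso B R) {w : V ≃ₗ[ℝ] V}
    (hw : w ∈ weylOn B P) :
    (∀ x y : V, B (w x) (w y) = B x y) ∧ w '' R = R := by
  induction hw using Subgroup.closure_induction with
  | mem w hwP =>
      obtain ⟨a, haP, rfl⟩ := hwP
      have haR := hPx haP
      constructor
      · intro x y; exact reflMap_isometry B hR.symm a x y
      · apply Set.eq_of_subset_of_subset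
        · rintro x ⟨y, hy, rfl⟩
          exact hR.reflInvariant a haR y hy
        · intro x hx
          exact ⟨reflMap B a x, hR.reflInvariant a haR x hx, reflMap_invol B a x⟩
  | one => constructor <;> simp
  | mul w w' hwc hwc' hw hw' =>
      constructor
      · intro x y
        have : ∀ z : V, (w * w') z = w (w' z) := fun z => rfl
        rw [this, this, hw.1, hw'.1]
      · have : ((w * w' : V ≃ₗ[ℝ] V) : V → V) = (w : V → V) ∘ (w' : V → V) := rfl
        rw [this, Set.image_comp, hw'.2, hw.2]
  | inv w hwc hw =>
      constructor
      · intro x y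
        have h1 : ∀ z : V, w ((w⁻¹ : V ≃ₗ[ℝ] V) z) = z := fun z => w.apply_symm_apply z
        rw [← hw.1 ((w⁻¹ : V ≃ₗ[ℝ] V) x) ((w⁻¹ : V ≃ₗ[ℝ] V) y), h1, h1]
      · have h2 : (w⁻¹ : V ≃ₗ[ℝ] V) '' (w '' R) = R := by
          rw [← Set.image_comp]
          have : ((w⁻¹ : V ≃ₗ[ℝ] V) : V → V) ∘ (w : V → V) = id := by
            funext z; exact w.symm_apply_apply z
          rw [this, Set.image_id]
        conv_lhs => rw [← hw.2]
        exact h2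


theorem reflEquiv_conj (hs : ∀ x y : V, B x y = B y x) {w : V ≃ₗ[ℝ] V}
    (hw : ∀ x y : V, B (w x) (w y) = B x y) (a x : V) :
    w (reflMap B a (w.symm x)) = reflMap B (w a) x := by
  have hBa : B (w a) (w a) = B a a := hw a a
  have hx : B (w.symm x) a = B x (w a) := by
    conv_rhs => rw [← w.apply_symm_apply x]
    exact (hw _ a).symm
  rw [reflMap_apply, reflMap_apply, map_sub, map_smul, w.apply_symm_apply, hBa, hx]

theorem reflOrbit_subset_nonIso (hR : IsEARS B R) (hPx : P ⊆ nonIso B R) :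
    reflOrbit B P ⊆ nonIso B R := by
  rintro x ⟨w, hw, a, ha, rfl⟩
  have h := weylOn_props hR hPx hw
  have haR := hPx ha
  refine ⟨?_, ?_⟩
  · rw [← h.2]; exact ⟨a, haR.1, rfl⟩
  · rw [h.1]; exact haR.2

theorem reflMap_mem_reflOrbit (hR : IsEARS B R) (hPx : P ⊆ nonIso B R) {x y : V}
    (hx : x ∈ reflOrbit B P) (hy : y ∈ reflOrbit B P) : reflMap B x y ∈ reflOrbit B P := by
  obtain ⟨w, hw, a, ha, rfl⟩ := hx
  obtain ⟨w', hw', a', ha', rfl⟩ := hy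
  have hinv := (weylOn_props hR hPx hw).1
  have hgen : reflEquiv B a ∈ weylOn B P := Subgroup.subset_closure ⟨a, ha, rfl⟩
  refine ⟨w * reflEquiv B a * w⁻¹ * w', mul_mem (mul_mem (mul_mem hw hgen) (inv_mem hw)) hw',
    a', ha', ?_⟩
  show w (reflMap B a (w.symm (w' a'))) = reflMap B (w a) (w' a')
  exact reflEquiv_conj hR.symm hinv a (w' a')

theorem reflOrbit_subset_earsOf : reflOrbit B P ⊆ earsOf B R P :=
  Set.subset_union_left

theorem earsOf_subset (hR : IsEARS B R) (hPx : P ⊆ nonIso B R) : earsOf B R P ⊆ R := by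
  rintro x (hx | hx)
  · exact (reflOrbit_subset_nonIso hR hPx hx).1
  · exact hx.2.1

theorem bb_eq_zero_of_mem_ker {x : V} (hx : x ∈ (LinearMap.ker B : Set V)) : B x x = 0 := by
  have : B x = 0 := hx
  rw [this]; rfl

theorem earsOf_inter_ker (hR : IsEARS B R) (hPx : P ⊆ nonIso B R) :
    earsOf B R P ∩ (LinearMap.ker B : Set V) =
      (reflOrbit B P - reflOrbit B P) ∩ (R ∩ (LinearMap.ker B : Set V)) := by
  ext x
  constructor
  · rintro ⟨hx | hx, hk⟩
    · exact absurd (bb_eq_zero_of_mem_ker hk) (reflOrbit_subset_nonIso hR hPx hx).2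
    · exact hx
  · rintro ⟨h1, h2⟩
    exact ⟨Or.inr ⟨h1, h2⟩, h2.2⟩

theorem nonIso_earsOf (hR : IsEARS B R) (hPx : P ⊆ nonIso B R) :
    nonIso B (earsOf B R P) = reflOrbit B P := by
  ext x
  constructor
  · rintro ⟨hx | hx, hne⟩
    · exact hx
    · exact absurd (bb_eq_zero_of_mem_ker hx.2.2) hne
  · intro hx
    exact ⟨Or.inl hx, (reflOrbit_subset_nonIso hR hPx hx).2⟩

theorem ker_inter_sub (hR : IsEARS B R) (hPx : P ⊆ nonIso B R) :
    (LinearMap.ker B : Set V) ∩ (reflOrbit B P - reflOrbit B P) =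
      (reflOrbit B P - reflOrbit B P) ∩ (R ∩ (LinearMap.ker B : Set V)) := by
  ext x
  constructor
  · rintro ⟨hk, hsub⟩
    obtain ⟨u, hu, v, hv, rfl⟩ := hsub
    have hx : u - v ∈ R := by
      have := hR.isoEq
      have hmem : u - v ∈ (LinearMap.ker B : Set V) ∩ (nonIso B R - nonIso B R) :=
        ⟨hk, ⟨u, reflOrbit_subset_nonIso hR hPx hu, v, reflOrbit_subset_nonIso hR hPx hv, rfl⟩⟩
      rw [← this] at hmem
      exact hmem.1
    exact ⟨⟨u, hu, v, hv, rfl⟩, hx, hk⟩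
  · rintro ⟨h1, h2⟩
    exact ⟨h2.2, h1⟩

theorem exists_lattice_basis [FiniteDimensional ℝ V] {s₀ : Set V}
    (hli : LinearIndependent ℝ ((↑) : s₀ → V)) (hsp : Submodule.span ℝ s₀ = ⊤)
    (E : Set V) (hE : E ⊆ (Submodule.span ℤ s₀ : Set V)) :
    ∃ (n : ℕ) (t : Fin n → V), LinearIndependent ℝ t ∧
      Submodule.span ℝ (Set.range t) = Submodule.span ℝ E ∧
      Submodule.span ℤ (Set.range t) = Submodule.span ℤ E := by
  have hfin : s₀.Finite := hli.setFinite
  haveI := hfin.fintype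
  let b : Module.Basis ↥s₀ ℝ V := Module.Basis.mk hli (by rw [Subtype.range_coe]; exact hsp.ge)
  have hrange : Set.range ⇑b = s₀ := by
    ext x; simp only [Set.mem_range, b, Module.Basis.mk_apply]
    exact ⟨fun ⟨i, hi⟩ => hi ▸ i.2, fun hx => ⟨⟨x, hx⟩, rfl⟩⟩
  set Λ : Submodule ℤ V := Submodule.span ℤ (Set.range ⇑b) with hΛ
  have hΛeq : Λ = Submodule.span ℤ s₀ := by rw [hΛ, hrange]
  let bΛ : Module.Basis ↥s₀ ℤ ↥Λ := Module.Basis.restrictScalars ℤ b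
  set H : Submodule ℤ V := Submodule.span ℤ E with hH
  have hHΛ : H ≤ Λ := by rw [hΛeq]; exact Submodule.span_le.mpr hE
  set N : Submodule ℤ ↥Λ := H.comap Λ.subtype with hN
  obtain ⟨n, ⟨bM, bN, f, a, hsnf⟩⟩ := N.smithNormalForm bΛ
  set d : ↥s₀ → V := fun j => ((bM j : ↥Λ) : V) with hd
  have hdspan : Submodule.span ℤ (Set.range d) = Λ := by
    have h1 : Set.range d = Λ.subtype '' (Set.range ⇑bM) := by
      rw [← Set.range_comp]; rfl
    rw [h1, Submodule.span_image, bM.span_eq, Submodule.map_subtype_top]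
  have hd_top : ⊤ ≤ Submodule.span ℝ (Set.range d) := by
    rw [← hsp]
    apply Submodule.span_le.mpr
    intro x hx
    have hxΛ : x ∈ (Λ : Set V) := by rw [hΛeq]; exact Submodule.subset_span hx
    rw [← hdspan] at hxΛ
    exact Submodule.span_subset_span ℤ ℝ _ hxΛ
  have hdli : LinearIndependent ℝ d :=
    linearIndependent_of_top_le_span_of_card_eq_finrank hd_top
      (Module.finrank_eq_card_basis b).symm
  set t : Fin n → V := fun i => (((bN i : ↥N) : ↥Λ) : V) with htdef
  have ht : ∀ i, t i = (a i : ℝ) • d (f i) := by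
    intro i
    have h2 := hsnf i
    show (((bN i : ↥N) : ↥Λ) : V) = (a i : ℝ) • d (f i)
    rw [h2, Int.cast_smul_eq_zsmul]
    rfl
  have ha0 : ∀ i, (a i : ℝ) ≠ 0 := by
    intro i h
    have h3 : t i = 0 := by rw [ht i, h, zero_smul]
    have h4 : (((bN i : ↥N) : ↥Λ) : V) = 0 := h3
    rw [Submodule.coe_eq_zero, Submodule.coe_eq_zero] at h4
    exact bN.ne_zero i h4
  have htli : LinearIndependent ℝ t := by
    have h1 : LinearIndependent ℝ (d ∘ ⇑f) := hdli.comp f f.injective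
    have h2 := h1.units_smul (fun i => Units.mk0 ((a i : ℝ)) (ha0 i))
    have h3 : t = (fun i => Units.mk0 ((a i : ℝ)) (ha0 i)) • (d ∘ ⇑f) := by
      funext i
      rw [ht i]
      rfl
    rw [h3]
    exact h2
  have hspanZ : Submodule.span ℤ (Set.range t) = H := by
    have h1 : Set.range t = Λ.subtype '' (Set.range fun i => ((bN i : ↥N) : ↥Λ)) := by
      rw [← Set.range_comp]; rfl
    have h2 : (Set.range fun i => ((bN i : ↥N) : ↥Λ)) = N.subtype '' Set.range ⇑bN := by
      rw [← Set.range_comp]; rfl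
    rw [h1, h2, Submodule.span_image, Submodule.span_image, bN.span_eq,
      Submodule.map_subtype_top, Submodule.map_comap_subtype]
    exact inf_eq_right.mpr hHΛ
  refine ⟨n, t, htli, le_antisymm ?_ ?_, hspanZ⟩
  · apply Submodule.span_le.mpr
    intro x hx
    have : x ∈ (H : Set V) := by rw [← hspanZ]; exact Submodule.subset_span hx
    exact Submodule.span_subset_span ℤ ℝ _ this
  · apply Submodule.span_le.mpr
    intro x hx
    have : x ∈ (Submodule.span ℤ (Set.range t) : Set V) := by
      rw [hspanZ]; exact Submodule.subset_span hx
    exact Submodule.span_subset_span ℤ ℝ _ this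


theorem orbit_perp_false (hR : IsEARS B R) (hPx : P ⊆ nonIso B R) {x : V}
    (hx : x ∈ reflOrbit B P) (hp : ∀ p ∈ P, B x p = 0) : False := by
  have fix : ∀ w ∈ weylOn B P, w x = x := by
    intro w hw
    induction hw using Subgroup.closure_induction with
    | mem w hwP =>
        obtain ⟨a, haP, rfl⟩ := hwP
        show reflMap B a x = x
        rw [reflMap_apply, hp a haP, mul_zero, zero_smul, sub_zero]
    | one => rfl
    | mul w w' _ _ hw hw' => show w (w' x) = x; rw [hw', hw]
    | inv w _ hw =>
        show w.symm x = x
        conv_lhs => rw [← hw]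
        exact w.symm_apply_apply x
  obtain ⟨w, hw, a, ha, hwa⟩ := hx
  have hxa : a = x := by
    have h1 := fix _ (inv_mem hw)
    have h2 : (w⁻¹ : V ≃ₗ[ℝ] V) x = a := by
      rw [← hwa]; exact w.symm_apply_apply a
    rw [h2] at h1; exact h1
  have hBx : B x x = 0 := hp x (hxa ▸ ha)
  exact ((hPx (hxa ▸ ha)).2) hBx

theorem conn_case (hR : IsEARS B R) (hPx : P ⊆ nonIso B R) {S₁ S₂ : Set V}
    (hS₁ne : S₁.Nonempty) (hSun : S₁ ∪ S₂ = reflOrbit B P)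
    (hPS : P ⊆ S₂) (hSperp : ∀ a ∈ S₁, ∀ p ∈ P, B a p = 0) : False := by
  obtain ⟨x, hx⟩ := hS₁ne
  have hxo : x ∈ reflOrbit B P := hSun ▸ Set.mem_union_left _ hx
  exact orbit_perp_false hR hPx hxo (fun p hp => hSperp x hx p hp)

end Helpers
/-- For a nonempty connected `P ⊆ R^×`, the set
`R_P = W_P⬝P ∪ ((W_P⬝P − W_P⬝P) ∩ R⁰)` is an extended affine root system in
`span_ℝ R_P` whose nonisotropic roots are `W_P⬝P` and whose isotropic roots are
`(W_P⬝P − W_P⬝P) ∩ R⁰`. -/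
theorem earsOf_is_EARS
    {V : Type*} [AddCommGroup V] [Module ℝ V] [FiniteDimensional ℝ V]
    (B : LinearMap.BilinForm ℝ V) (R : Set V) (hR : IsEARS B R) (hred : IsReduced B R)
    (P : Set V) (hPx : P ⊆ nonIso B R) (hne : P.Nonempty) (hconn : IsConnSet B P) :
    IsEARS (restrictForm B (Submodule.span ℝ (earsOf B R P)))
      (Subtype.val ⁻¹' earsOf B R P) ∧
    nonIso B (earsOf B R P) = reflOrbit B P ∧
    earsOf B R P ∩ (LinearMap.ker B : Set V) =
      (reflOrbit B P - reflOrbit B P) ∩ (R ∩ (LinearMap.ker B : Set V)) := by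
  set E : Set V := earsOf B R P with hEdef
  set U : Submodule ℝ V := Submodule.span ℝ E with hUdef
  set B' : LinearMap.BilinForm ℝ ↥U := restrictForm B U with hB'def
  set R' : Set ↥U := Subtype.val ⁻¹' E with hR'def
  have hB'val : ∀ x y : ↥U, B' x y = B (x : V) (y : V) := fun x y => rfl
  have horb : reflOrbit B P ⊆ nonIso B R := reflOrbit_subset_nonIso hR hPx
  have hER : E ⊆ R := earsOf_subset hR hPx
  have claim2 : nonIso B E = reflOrbit B P := nonIso_earsOf hR hPx
  have claim3 : E ∩ (LinearMap.ker B : Set V) =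
      (reflOrbit B P - reflOrbit B P) ∩ (R ∩ (LinearMap.ker B : Set V)) :=
    earsOf_inter_ker hR hPx
  have hEU : E ⊆ (U : Set V) := Submodule.subset_span
  have horbE : reflOrbit B P ⊆ E := reflOrbit_subset_earsOf
  have hvalR' : Subtype.val '' R' = E := by
    rw [hR'def, Set.image_preimage_eq_inter_range, Subtype.range_coe]
    exact Set.inter_eq_self_of_subset_left hEU
  have hnonIso' : nonIso B' R' = Subtype.val ⁻¹' reflOrbit B P := by
    ext x
    constructor
    · rintro ⟨hx1, hx2⟩
      have : (x : V) ∈ nonIso B E := ⟨hx1, by rw [← hB'val x x]; exact hx2⟩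
      rw [claim2] at this
      exact this
    · intro hx
      exact ⟨horbE hx, by rw [hB'val x x]; exact (horb hx).2⟩
  have hker1 : ∀ x : ↥U, x ∈ LinearMap.ker B' → (x : V) ∈ LinearMap.ker B := by
    intro x hx
    have h0 : B' x = 0 := hx
    have h1 : B (x : V) (x : V) = 0 := by rw [← hB'val x x, h0]; rfl
    exact mem_ker_of_self_eq_zero B hR.symm hR.posSemidef h1
  have hker2 : ∀ x : ↥U, (x : V) ∈ LinearMap.ker B → x ∈ LinearMap.ker B' := by
    intro x hx
    rw [LinearMap.mem_ker]
    ext y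
    rw [LinearMap.zero_apply, hB'val x y]
    have h0 : B (x : V) = 0 := hx
    rw [h0]; rfl
  refine ⟨?_, claim2, claim3⟩
  constructor
  · intro x y; rw [hB'val, hB'val, hR.symm]
  · intro x; rw [hB'val]; exact hR.posSemidef _
  · -- lattice
    obtain ⟨s₀, hli, hsp, hcl⟩ := hR.lattice
    have hEsub : E ⊆ (Submodule.span ℤ s₀ : Set V) := by
      intro x hx
      have h1 : x ∈ AddSubgroup.closure R := AddSubgroup.subset_closure (hER hx)
      rw [hcl, ← Submodule.span_int_eq_addSubgroupClosure] at h1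
      exact h1
    obtain ⟨n, t, htli, htR, htZ⟩ := exists_lattice_basis hli hsp E hEsub
    have htU : ∀ i, t i ∈ U := by
      intro i
      rw [hUdef, ← htR]
      exact Submodule.subset_span (Set.mem_range_self i)
    set t' : Fin n → ↥U := fun i => ⟨t i, htU i⟩ with ht'def
    have hcomp : ⇑U.subtype ∘ t' = t := rfl
    have ht'li : LinearIndependent ℝ t' :=
      LinearIndependent.of_comp U.subtype (by rw [hcomp]; exact htli)
    have himg : ⇑U.subtype '' Set.range t' = Set.range t := by
      rw [← Set.range_comp, hcomp]
    refine ⟨Set.range t', (linearIndepOn_id_range_iff ht'li.injective).mpr ht'li, ?_, ?_⟩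
    · apply Submodule.map_injective_of_injective U.injective_subtype
      rw [Submodule.map_span, himg, htR, Submodule.map_subtype_top]
    · apply AddSubgroup.map_injective
        (f := U.subtype.toAddMonoidHom) (Subtype.val_injective)
      rw [AddMonoidHom.map_closure, AddMonoidHom.map_closure]
      have h1 : ⇑U.subtype.toAddMonoidHom '' R' = E := hvalR'
      have h2 : ⇑U.subtype.toAddMonoidHom '' Set.range t' = Set.range t := himg
      rw [h1, h2, ← Submodule.span_int_eq_addSubgroupClosure,
        ← Submodule.span_int_eq_addSubgroupClosure, htZ]
  · -- integrality
    intro a ha b hb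
    rw [hnonIso'] at ha hb
    obtain ⟨m, hm⟩ := hR.integrality _ (horb ha) _ (horb hb)
    exact ⟨m, by rw [hB'val, hB'val]; exact hm⟩
  · -- reflInvariant
    intro a ha b hb
    rw [hnonIso'] at ha
    have hvalrefl : ((reflMap B' a b : ↥U) : V) = reflMap B (a : V) (b : V) := by
      rw [reflMap_apply, reflMap_apply, hB'val, hB'val]
      push_cast
      rfl
    show ((reflMap B' a b : ↥U) : V) ∈ E
    rw [hvalrefl]
    rcases hb with hb | hb
    · exact horbE (reflMap_mem_reflOrbit hR hPx ha hb)
    · have hbk : B (b : V) = 0 := hb.2.2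
      have : reflMap B (a : V) (b : V) = (b : V) := by
        rw [reflMap_apply]
        have : B (b : V) (a : V) = 0 := by rw [hbk]; rfl
        rw [this, mul_zero, zero_smul, sub_zero]
      rw [this]
      exact Or.inr hb
  · -- isoEq
    ext x
    simp only [Set.mem_inter_iff, SetLike.mem_coe]
    constructor
    · rintro ⟨hx1, hx2⟩
      have hEk : (x : V) ∈ E ∩ (LinearMap.ker B : Set V) := ⟨hx1, hker1 x hx2⟩
      rw [claim3] at hEk
      obtain ⟨⟨u, hu, v, hv, huv⟩, _⟩ := hEk
      refine ⟨hx2, ⟨u, hEU (horbE hu)⟩, ?_, ⟨v, hEU (horbE hv)⟩, ?_, ?_⟩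
      · rw [hnonIso']; exact hu
      · rw [hnonIso']; exact hv
      · apply Subtype.ext; simpa using huv
    · rintro ⟨hx1, u, hu, v, hv, huv⟩
      rw [hnonIso'] at hu hv
      have hxk : (x : V) ∈ (LinearMap.ker B : Set V) := hker1 x hx1
      have hsub : (x : V) ∈ reflOrbit B P - reflOrbit B P := by
        refine ⟨(u : V), hu, (v : V), hv, ?_⟩
        rw [← huv]; rfl
      have hmem : (x : V) ∈ (LinearMap.ker B : Set V) ∩
          (reflOrbit B P - reflOrbit B P) := ⟨hxk, hsub⟩
      rw [ker_inter_sub hR hPx] at hmem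
      exact ⟨Or.inr hmem, hx1⟩
  · -- notTwice
    intro a ha h2a
    rw [hnonIso'] at ha
    have h1 : ((2 : ℝ) • a : ↥U) = (⟨(2 : ℝ) • (a : V), U.smul_mem _ a.2⟩ : ↥U) := rfl
    have h2 : (2 : ℝ) • (a : V) ∈ E := by
      have := h2a
      rw [hR'def] at this
      simpa using this
    exact hR.notTwice _ (horb ha) (hER h2)
  · -- conn
    rintro ⟨Q₁, Q₂, hQ₁ne, hQ₂ne, hun, hint, hperp⟩
    set S₁ : Set V := Subtype.val '' Q₁ with hS₁def
    set S₂ : Set V := Subtype.val '' Q₂ with hS₂def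
    have hS₁ne : S₁.Nonempty := hQ₁ne.image _
    have hS₂ne : S₂.Nonempty := hQ₂ne.image _
    have hSun : S₁ ∪ S₂ = reflOrbit B P := by
      rw [hS₁def, hS₂def, ← Set.image_union, hun, hnonIso',
        Set.image_preimage_eq_inter_range, Subtype.range_coe]
      exact Set.inter_eq_self_of_subset_left (fun x hx => hEU (horbE hx))
    have hSint : S₁ ∩ S₂ = ∅ := by
      rw [hS₁def, hS₂def, ← Set.image_inter Subtype.val_injective, hint, Set.image_empty]
    have hSperp : ∀ a ∈ S₁, ∀ b ∈ S₂, B a b = 0 := by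
      rintro a ⟨a', ha', rfl⟩ b ⟨b', hb', rfl⟩
      rw [← hB'val a' b']
      exact hperp a' ha' b' hb'
    have hPo : P ⊆ reflOrbit B P := fun p hp => ⟨1, one_mem _, p, hp, rfl⟩
    have hPcases : P ⊆ S₁ ∨ P ⊆ S₂ := by
      by_contra hc
      push_neg at hc
      obtain ⟨hc1, hc2⟩ := hc
      rw [Set.not_subset] at hc1 hc2
      obtain ⟨p₁, hp₁, hp₁S⟩ := hc1
      obtain ⟨p₂, hp₂, hp₂S⟩ := hc2
      have hp₁2 : p₁ ∈ S₂ := by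
        have := hSun ▸ hPo hp₁
        rcases this with h | h
        · exact absurd h hp₁S
        · exact h
      have hp₂1 : p₂ ∈ S₁ := by
        have := hSun ▸ hPo hp₂
        rcases this with h | h
        · exact h
        · exact absurd h hp₂S
      apply hconn
      refine ⟨P ∩ S₁, P ∩ S₂, ⟨p₂, hp₂, hp₂1⟩, ⟨p₁, hp₁, hp₁2⟩, ?_, ?_, ?_⟩
      · rw [← Set.inter_union_distrib_left, hSun]
        exact Set.inter_eq_self_of_subset_left hPo
      · apply Set.eq_empty_of_subset_empty
        rw [← hSint]
        exact fun z hz => ⟨hz.1.2, hz.2.2⟩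
      · exact fun a ha b hb => hSperp a ha.2 b hb.2
    rcases hPcases with hPS | hPS
    · refine conn_case hR hPx hS₂ne ?_ hPS ?_
      · rw [Set.union_comm]; exact hSun
      · intro a ha p hp
        rw [hR.symm]
        exact hSperp p (hPS hp) a ha
    · exact conn_case hR hPx hS₁ne hSun hPS (fun a ha p hp => hSperp a ha p (hPS hp))


end EARSPaper
end
end
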